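/- arXiv:2211.01986 — 9 statements merged into one kernel-verified Lean document; each statement's English description precedes it below -/
import Mathlib

section
/- Define h(x) = Γ(1+3x) - 2Γ(1+2x) + Γ(1+x) for x ∈ (0, 1/5). Then h(0) = 0, h'(0) = 0, and h(x) ≤ 2x² for all 0 < x < 1/5. -/
/-!
Write `Γ(1 + 3x) - 2Γ(1 + 2x) + Γ(1 + x) = ∫₀^∞ e^{-t} E (E - 1)² dt` with `E = t^x = e^u`,
`u = x log t`.

On `(0, 1]` we have `u ≤ 0`, so `E (E - 1)² ≤ (1 + u + u²/2) u²`; bounding `e^{-t}` by Taylor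
polynomials leaves the moments `∫₀¹ tⁿ logᵐ t dt = (-1)ᵐ m! / (n + 1)^{m+1}`.

On `[1, ∞)` we have `E (E - 1)² ≤ u² E³` and `E³ = t^{3x} ≤ 1 + 3x (t - 1)` (Bernoulli, `3x ≤ 1`);
bounding `log t` by tangent lines leaves cubic polynomials times `e^{-t}`, integrated exactly.

Altogether the combination is at most `x² (1.9981 - 4.068 x + 12 x²)`. The margin is thin: the
combination is `~ Γ''(1) x² ≈ 1.978 x²` as `x → 0`.
-/

open Real MeasureTheory Set Filter Topology Asymptotics

namespace GammaSecondDifference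

lemma log_le_of_exp_neg_one_sub_le {c₁ c₂ t : ℝ} (hc : exp (-1 - c₁) ≤ c₂) (ht : 0 < t) :
    log t ≤ c₁ + c₂ * t := by
  have hc₂ : 0 < c₂ := (exp_pos _).trans_le hc
  have h₁ := log_le_sub_one_of_pos (mul_pos hc₂ ht)
  have h₂ : -1 - c₁ ≤ log c₂ := (le_log_iff_exp_le hc₂).2 hc
  rw [log_mul hc₂.ne' ht.ne'] at h₁
  linarith

lemma exp_neg_le_of_one_le_mul {a b w : ℝ} (ha : a ≤ exp w) (hb : 0 ≤ b) (hab : 1 ≤ b * a) :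
    exp (-w) ≤ b := by
  have h : exp (-w) * exp w = 1 := by rw [← exp_add, neg_add_cancel, exp_zero]
  nlinarith [exp_pos (-w), mul_le_mul_of_nonneg_left ha hb]

lemma exp_le_one_add_add_sq_div_two {u : ℝ} (hu : u ≤ 0) : exp u ≤ 1 + u + u ^ 2 / 2 := by
  have h := exp_neg_le_of_one_le_mul (quadratic_le_exp_of_nonneg (neg_nonneg.2 hu))
    (b := 1 + u + u ^ 2 / 2) (by nlinarith [sq_nonneg (u + 1)])
    (by nlinarith [pow_two_nonneg (u ^ 2)])
  rwa [neg_neg] at h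

lemma exp_neg_le_quartic {t : ℝ} (ht : 0 ≤ t) :
    exp (-t) ≤ 1 - t + t ^ 2 / 2 - t ^ 3 / 6 + t ^ 4 / 24 := by
  have hE : 1 + t + t ^ 2 / 2 + t ^ 3 / 6 + t ^ 4 / 24 ≤ exp t := by
    simpa [Finset.sum_range_succ, Nat.factorial] using sum_le_exp_of_nonneg ht 5
  refine exp_neg_le_of_one_le_mul hE ?_ ?_
  · nlinarith [sq_nonneg (t ^ 2 - 2 * t), sq_nonneg (t - 3 / 2)]
  · nlinarith [pow_nonneg ht 6, pow_nonneg ht 8, sq_nonneg (t ^ 2 - 2 * t), sq_nonneg (t - 3 / 2)]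

lemma exp_mul_sq_exp_sub_one_le_of_nonpos {u : ℝ} (hu : u ≤ 0) :
    exp u * (exp u - 1) ^ 2 ≤ (1 + u + u ^ 2 / 2) * u ^ 2 := by
  have hsq : (exp u - 1) ^ 2 ≤ u ^ 2 := by
    nlinarith [add_one_le_exp u, exp_le_one_iff.2 hu]
  have hq := exp_le_one_add_add_sq_div_two hu
  calc exp u * (exp u - 1) ^ 2 ≤ (1 + u + u ^ 2 / 2) * (exp u - 1) ^ 2 := by gcongr
    _ ≤ (1 + u + u ^ 2 / 2) * u ^ 2 := by gcongr; linarith [exp_pos u]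

lemma exp_mul_sq_exp_sub_one_le_of_nonneg {u : ℝ} (hu : 0 ≤ u) :
    exp u * (exp u - 1) ^ 2 ≤ u ^ 2 * exp u ^ 3 := by
  have h : exp u - 1 ≤ u * exp u := by
    have := mul_le_mul_of_nonneg_left (add_one_le_exp (-u)) (exp_pos u).le
    rw [← exp_add, add_neg_cancel, exp_zero] at this
    linarith
  have h₀ : 0 ≤ exp u - 1 := by linarith [one_le_exp hu]
  calc exp u * (exp u - 1) ^ 2 ≤ exp u * (u * exp u) ^ 2 := by gcongr
    _ = u ^ 2 * exp u ^ 3 := by ring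

noncomputable def secondDiffIntegrand (x t : ℝ) : ℝ := exp (-t) * t ^ x * (t ^ x - 1) ^ 2

lemma secondDiffIntegrand_eq_exp {x t : ℝ} (ht : 0 < t) :
    secondDiffIntegrand x t = exp (-t) * (exp (x * log t) * (exp (x * log t) - 1) ^ 2) := by
  rw [secondDiffIntegrand, rpow_def_of_pos ht, mul_comm (log t), mul_assoc]

lemma secondDiffIntegrand_eq_rpow {x t : ℝ} (ht : 0 ≤ t) :
    secondDiffIntegrand x t
      = exp (-t) * t ^ (3 * x) - 2 * (exp (-t) * t ^ (2 * x)) + exp (-t) * t ^ x := by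
  have h (n : ℕ) : t ^ (n * x) = (t ^ x) ^ n := by
    rw [← rpow_natCast, ← rpow_mul ht, mul_comm]
  have h₃ := h 3
  have h₂ := h 2
  push_cast at h₃ h₂
  rw [secondDiffIntegrand, h₃, h₂]
  ring

lemma integrableOn_exp_neg_mul_rpow {s : ℝ} (hs : -1 < s) :
    IntegrableOn (fun t => exp (-t) * t ^ s) (Ioi 0) := by
  simpa using GammaIntegral_convergent (s := 1 + s) (by linarith)

lemma integrableOn_secondDiffIntegrand {x : ℝ} (hx : -(1 / 3) < x) :
    IntegrableOn (secondDiffIntegrand x) (Ioi 0) :=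
  (((integrableOn_exp_neg_mul_rpow (by linarith)).sub
    ((integrableOn_exp_neg_mul_rpow (by linarith)).const_mul 2)).add
    (integrableOn_exp_neg_mul_rpow (by linarith))).congr_fun
    (fun t ht => (secondDiffIntegrand_eq_rpow (le_of_lt ht)).symm) measurableSet_Ioi

lemma gamma_second_diff_eq_integral {x : ℝ} (hx : -(1 / 3) < x) :
    Gamma (1 + 3 * x) - 2 * Gamma (1 + 2 * x) + Gamma (1 + x)
      = ∫ t in Ioi 0, secondDiffIntegrand x t := by
  have e {s : ℝ} (hs : -1 < s) : Gamma (1 + s) = ∫ t in Ioi 0, exp (-t) * t ^ s := by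
    simpa using Gamma_eq_integral (s := 1 + s) (by linarith)
  have i₃ := integrableOn_exp_neg_mul_rpow (s := 3 * x) (by linarith)
  have i₂ := (integrableOn_exp_neg_mul_rpow (s := 2 * x) (by linarith)).const_mul 2
  have i₁ := integrableOn_exp_neg_mul_rpow (s := x) (by linarith)
  rw [e (by linarith), e (by linarith), e (by linarith), ← integral_const_mul,
    ← integral_sub i₃ i₂, ← integral_add (i₃.fun_sub i₂) i₁]
  exact setIntegral_congr_fun measurableSet_Ioi fun t ht =>
    (secondDiffIntegrand_eq_rpow (le_of_lt ht)).symm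

lemma setIntegral_Ioi_eq_add {f : ℝ → ℝ} {a b : ℝ} (hab : a ≤ b) (hf : IntegrableOn f (Ioi a)) :
    ∫ t in Ioi a, f t = (∫ t in Ioc a b, f t) + ∫ t in Ioi b, f t := by
  rw [← intervalIntegral.integral_of_le hab,
    intervalIntegral.integral_interval_add_Ioi hf (hf.mono_set (Ioi_subset_Ioi hab))]

section CubicTimesExpNeg

variable (c₀ c₁ c₂ c₃ : ℝ)

/-- `S = P + P' + P'' + P'''` for `P t = c₀ + c₁ t + c₂ t² + c₃ t³`, so that
`(-S e^{-t})' = (S - S') e^{-t} = P e^{-t}`. -/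
def cubicExpPrimitive (t : ℝ) : ℝ :=
  (c₀ + c₁ + 2 * c₂ + 6 * c₃) + (c₁ + 2 * c₂ + 6 * c₃) * t + (c₂ + 3 * c₃) * t ^ 2 + c₃ * t ^ 3

lemma hasDerivAt_cubicExpPrimitive (t : ℝ) :
    HasDerivAt (fun s => -(cubicExpPrimitive c₀ c₁ c₂ c₃ s * exp (-s)))
      ((c₀ + c₁ * t + c₂ * t ^ 2 + c₃ * t ^ 3) * exp (-t)) t := by
  have hS : HasDerivAt (cubicExpPrimitive c₀ c₁ c₂ c₃)
      ((c₁ + 2 * c₂ + 6 * c₃) + 2 * (c₂ + 3 * c₃) * t + 3 * c₃ * t ^ 2) t := by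
    unfold cubicExpPrimitive
    exact (((((hasDerivAt_id' t).const_mul (c₁ + 2 * c₂ + 6 * c₃)).const_add
      (c₀ + c₁ + 2 * c₂ + 6 * c₃)).fun_add ((hasDerivAt_pow 2 t).const_mul (c₂ + 3 * c₃))).fun_add
      ((hasDerivAt_pow 3 t).const_mul c₃)).congr_deriv (by push_cast; ring)
  refine (hS.mul (hasDerivAt_neg' t).exp).neg.congr_deriv ?_
  simp only [cubicExpPrimitive]
  ring

lemma tendsto_cubicExpPrimitive_mul_exp_neg :
    Tendsto (fun t => cubicExpPrimitive c₀ c₁ c₂ c₃ t * exp (-t)) atTop (𝓝 0) := by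
  have h k := tendsto_pow_mul_exp_neg_atTop_nhds_zero k
  have := ((((h 0).const_mul (c₀ + c₁ + 2 * c₂ + 6 * c₃)).add
    ((h 1).const_mul (c₁ + 2 * c₂ + 6 * c₃))).add ((h 2).const_mul (c₂ + 3 * c₃))).add
    ((h 3).const_mul c₃)
  simp only [mul_zero, add_zero] at this
  convert this using 2 with t
  simp only [cubicExpPrimitive]
  ring

lemma integrableOn_Ioi_cubic_mul_exp_neg (a : ℝ) :
    IntegrableOn (fun t => (c₀ + c₁ * t + c₂ * t ^ 2 + c₃ * t ^ 3) * exp (-t)) (Ioi a) := by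
  refine integrable_of_isBigO_exp_neg one_half_pos (by fun_prop) ?_
  have h k := (isLittleO_pow_exp_pos_mul_atTop k one_half_pos).isBigO
  have hP : (fun t : ℝ => c₀ + c₁ * t + c₂ * t ^ 2 + c₃ * t ^ 3) =O[atTop]
      fun t => exp (1 / 2 * t) := by
    have := (((h 0).const_mul_left c₀).add ((h 1).const_mul_left c₁)).add
      (((h 2).const_mul_left c₂).add ((h 3).const_mul_left c₃))
    refine this.congr_left fun t => ?_
    simp only [pow_zero, pow_one]
    ring
  refine (hP.mul (isBigO_refl (fun t => exp (-t)) atTop)).congr_right fun t => ?_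
  rw [← exp_add]
  ring_nf

lemma integral_Ioi_cubic_mul_exp_neg (a : ℝ) :
    ∫ t in Ioi a, (c₀ + c₁ * t + c₂ * t ^ 2 + c₃ * t ^ 3) * exp (-t)
      = cubicExpPrimitive c₀ c₁ c₂ c₃ a * exp (-a) := by
  rw [integral_Ioi_of_hasDerivAt_of_tendsto' (fun t _ => hasDerivAt_cubicExpPrimitive c₀ c₁ c₂ c₃ t)
    (integrableOn_Ioi_cubic_mul_exp_neg c₀ c₁ c₂ c₃ a)
    (by simpa using (tendsto_cubicExpPrimitive_mul_exp_neg c₀ c₁ c₂ c₃).neg)]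
  ring

lemma integral_Ioc_cubic_mul_exp_neg {a b : ℝ} (hab : a ≤ b) :
    ∫ t in Ioc a b, (c₀ + c₁ * t + c₂ * t ^ 2 + c₃ * t ^ 3) * exp (-t)
      = cubicExpPrimitive c₀ c₁ c₂ c₃ a * exp (-a)
        - cubicExpPrimitive c₀ c₁ c₂ c₃ b * exp (-b) := by
  rw [← integral_Ioi_cubic_mul_exp_neg, ← integral_Ioi_cubic_mul_exp_neg,
    setIntegral_Ioi_eq_add hab (integrableOn_Ioi_cubic_mul_exp_neg c₀ c₁ c₂ c₃ a)]
  ring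

end CubicTimesExpNeg

lemma exp_neg_image_Ioi_zero : (fun u : ℝ => exp (-u)) '' Ioi 0 = Ioo 0 1 := by
  ext t
  constructor
  · rintro ⟨u, hu, rfl⟩
    exact ⟨exp_pos _, exp_lt_one_iff.2 (neg_lt_zero.2 hu)⟩
  · rintro ⟨h₀, h₁⟩
    exact ⟨-log t, neg_pos.2 (log_neg h₀ h₁), by simp [exp_log h₀]⟩

lemma hasDerivWithinAt_exp_neg (u : ℝ) :
    HasDerivWithinAt (fun u : ℝ => exp (-u)) (-exp (-u)) (Ioi 0) u :=
  ((hasDerivAt_neg' u).exp.congr_deriv (by ring)).hasDerivWithinAt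

lemma injOn_exp_neg : InjOn (fun u : ℝ => exp (-u)) (Ioi 0) :=
  fun _ _ _ _ h => neg_injective (exp_injective h)

lemma abs_deriv_smul_rpow_mul_log_pow (s : ℝ) (m : ℕ) (u : ℝ) :
    |-exp (-u)| • (exp (-u) ^ s * log (exp (-u)) ^ m)
      = (-1) ^ m * (u ^ ((m + 1 : ℝ) - 1) * exp (-((s + 1) * u))) := by
  rw [abs_neg, abs_of_pos (exp_pos _), log_exp, smul_eq_mul, ← exp_mul, add_sub_cancel_right,
    rpow_natCast, neg_pow, ← mul_assoc, ← mul_assoc, ← exp_add]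
  ring_nf

lemma integrableOn_rpow_mul_log_pow {s : ℝ} (hs : -1 < s) (m : ℕ) :
    IntegrableOn (fun t => t ^ s * log t ^ m) (Ioc 0 1) := by
  rw [integrableOn_Ioc_iff_integrableOn_Ioo, ← exp_neg_image_Ioi_zero,
    integrableOn_image_iff_integrableOn_abs_deriv_smul measurableSet_Ioi
      (fun u _ => hasDerivWithinAt_exp_neg u) injOn_exp_neg]
  simp only [abs_deriv_smul_rpow_mul_log_pow]
  refine Integrable.const_mul ?_ _
  have := integrableOn_rpow_mul_exp_neg_mul_rpow (s := (m : ℝ)) (p := 1) (b := s + 1)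
    (by linarith [m.cast_nonneg (α := ℝ)]) one_pos (by linarith)
  refine this.congr_fun (fun u hu => ?_) measurableSet_Ioi
  simp only [rpow_one, add_sub_cancel_right, neg_mul]

lemma integral_rpow_mul_log_pow {s : ℝ} (hs : -1 < s) (m : ℕ) :
    ∫ t in Ioc 0 1, t ^ s * log t ^ m = (-1) ^ m * m.factorial / (s + 1) ^ (m + 1) := by
  rw [integral_Ioc_eq_integral_Ioo, ← exp_neg_image_Ioi_zero,
    integral_image_eq_integral_abs_deriv_smul measurableSet_Ioi
      (fun u _ => hasDerivWithinAt_exp_neg u) injOn_exp_neg]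
  simp only [abs_deriv_smul_rpow_mul_log_pow]
  rw [integral_const_mul, integral_rpow_mul_exp_neg_mul_Ioi (by positivity) (by linarith),
    ← Nat.cast_add_one, rpow_natCast, Nat.cast_add_one, Gamma_nat_eq_factorial, one_div, inv_pow]
  ring

lemma integrableOn_pow_mul_log_pow (n m : ℕ) :
    IntegrableOn (fun t => t ^ n * log t ^ m) (Ioc 0 1) := by
  simpa using integrableOn_rpow_mul_log_pow (s := n) (by linarith [n.cast_nonneg (α := ℝ)]) m

lemma integrableOn_sum_mul_log_pow (c : ℕ → ℝ) (N m : ℕ) :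
    IntegrableOn (fun t => (∑ n ∈ Finset.range N, c n * t ^ n) * log t ^ m) (Ioc 0 1) := by
  simp_rw [Finset.sum_mul, mul_assoc]
  exact integrable_finsetSum _ fun n _ => (integrableOn_pow_mul_log_pow n m).const_mul (c n)

lemma integral_sum_mul_log_pow (c : ℕ → ℝ) (N m : ℕ) :
    ∫ t in Ioc 0 1, (∑ n ∈ Finset.range N, c n * t ^ n) * log t ^ m
      = ∑ n ∈ Finset.range N, c n * ((-1) ^ m * m.factorial / (n + 1) ^ (m + 1)) := by
  simp_rw [Finset.sum_mul, mul_assoc]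
  rw [integral_finsetSum _ fun n _ => (integrableOn_pow_mul_log_pow n m).const_mul (c n)]
  refine Finset.sum_congr rfl fun n _ => ?_
  have h := integral_rpow_mul_log_pow (s := n) (by linarith [n.cast_nonneg (α := ℝ)]) m
  simp only [rpow_natCast] at h
  rw [integral_const_mul, h]

lemma secondDiffIntegrand_le_of_le_one {x t : ℝ} (hx : 0 ≤ x) (ht₀ : 0 < t) (ht₁ : t ≤ 1) :
    secondDiffIntegrand x t ≤ x ^ 2 * ((1 - t + t ^ 2 / 2 - t ^ 3 / 6 + t ^ 4 / 24) * log t ^ 2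
      + x * ((1 - t) * log t ^ 3) + x ^ 2 / 2 * log t ^ 4) := by
  have hL : log t ≤ 0 := log_nonpos ht₀.le ht₁
  have h₂ : exp (-t) * log t ^ 2 ≤ (1 - t + t ^ 2 / 2 - t ^ 3 / 6 + t ^ 4 / 24) * log t ^ 2 := by
    gcongr
    exact exp_neg_le_quartic ht₀.le
  have h₃ : exp (-t) * log t ^ 3 ≤ (1 - t) * log t ^ 3 :=
    mul_le_mul_of_nonpos_right (by linarith [add_one_le_exp (-t)]) (Odd.pow_nonpos (by decide) hL)
  have h₄ : exp (-t) * log t ^ 4 ≤ log t ^ 4 :=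
    mul_le_of_le_one_left (by positivity) (exp_le_one_iff.2 (by linarith))
  rw [secondDiffIntegrand_eq_exp ht₀]
  calc exp (-t) * (exp (x * log t) * (exp (x * log t) - 1) ^ 2)
      ≤ exp (-t) * ((1 + x * log t + (x * log t) ^ 2 / 2) * (x * log t) ^ 2) := by
        have hu := mul_nonpos_of_nonneg_of_nonpos hx hL
        exact mul_le_mul_of_nonneg_left (exp_mul_sq_exp_sub_one_le_of_nonpos hu) (exp_pos _).le
    _ = x ^ 2 * (exp (-t) * log t ^ 2 + x * (exp (-t) * log t ^ 3)
          + x ^ 2 / 2 * (exp (-t) * log t ^ 4)) := by ring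
    _ ≤ _ := by gcongr

lemma secondDiffIntegrand_le_of_one_le {x t : ℝ} (hx₀ : 0 ≤ x) (hx₁ : 3 * x ≤ 1) (ht : 1 ≤ t) :
    secondDiffIntegrand x t ≤ x ^ 2 * ((log t ^ 2 + 3 * x * (log t ^ 2 * (t - 1))) * exp (-t)) := by
  have ht₀ : 0 < t := by linarith
  have hu : 0 ≤ x * log t := mul_nonneg hx₀ (log_nonneg ht)
  have hcube : exp (x * log t) ^ 3 ≤ 1 + 3 * x * (t - 1) := by
    calc exp (x * log t) ^ 3 = t ^ (3 * x) := by
          rw [← exp_nat_mul, rpow_def_of_pos ht₀]; push_cast; ring_nf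
      _ ≤ 1 + 3 * x * (t - 1) := by
          simpa using rpow_one_add_le_one_add_mul_self (s := t - 1) (by linarith) (by linarith) hx₁
  rw [secondDiffIntegrand_eq_exp ht₀]
  calc exp (-t) * (exp (x * log t) * (exp (x * log t) - 1) ^ 2)
      ≤ exp (-t) * ((x * log t) ^ 2 * exp (x * log t) ^ 3) :=
        mul_le_mul_of_nonneg_left (exp_mul_sq_exp_sub_one_le_of_nonneg hu) (exp_pos _).le
    _ ≤ exp (-t) * ((x * log t) ^ 2 * (1 + 3 * x * (t - 1))) := by gcongr
    _ = _ := by ring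

lemma setIntegral_secondDiffIntegrand_le {x : ℝ} {s : Set ℝ} {p q : ℝ → ℝ} (hx₀ : 0 ≤ x)
    (hx₁ : 3 * x ≤ 1) (hs : MeasurableSet s) (hs₁ : s ⊆ Ici 1)
    (hp : ∀ t ∈ s, log t ≤ p t) (hq : ∀ t ∈ s, log t ≤ q t)
    (hint : IntegrableOn (fun t => (p t ^ 2 + 3 * x * (q t ^ 2 * (t - 1))) * exp (-t)) s) :
    ∫ t in s, secondDiffIntegrand x t
      ≤ x ^ 2 * ∫ t in s, (p t ^ 2 + 3 * x * (q t ^ 2 * (t - 1))) * exp (-t) := by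
  rw [← integral_const_mul]
  have hs₀ : s ⊆ Ioi 0 := fun t ht => mem_Ioi.2 (zero_lt_one.trans_le (hs₁ ht : 1 ≤ t))
  refine setIntegral_mono_on ((integrableOn_secondDiffIntegrand (by linarith)).mono_set hs₀)
    (hint.const_mul _) hs fun t ht => ?_
  have ht₁ : 1 ≤ t := hs₁ ht
  have hL : 0 ≤ log t := log_nonneg ht₁
  refine (secondDiffIntegrand_le_of_one_le hx₀ hx₁ ht₁).trans ?_
  have ht₁' : 0 ≤ t - 1 := by linarith
  gcongr
  exacts [hp t ht, hq t ht]

lemma integral_Ioc_zero_one_secondDiffIntegrand_le {x : ℝ} (hx : 0 ≤ x) :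
    ∫ t in Ioc 0 1, secondDiffIntegrand x t
      ≤ x ^ 2 * (385019 / 216000 - 45 / 8 * x + 12 * x ^ 2) := by
  have h₂ : (fun t => (1 - t + t ^ 2 / 2 - t ^ 3 / 6 + t ^ 4 / 24) * log t ^ 2)
      = fun t => (∑ n ∈ Finset.range 5, (-1 : ℝ) ^ n / n.factorial * t ^ n) * log t ^ 2 := by
    ext t; congr 1; simp [Finset.sum_range_succ, Nat.factorial]; ring
  have h₃ : (fun t => (1 - t) * log t ^ 3)
      = fun t => (∑ n ∈ Finset.range 2, (-1 : ℝ) ^ n * t ^ n) * log t ^ 3 := by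
    ext t; congr 1; simp [Finset.sum_range_succ]; ring
  have h₄ : (fun t => log t ^ 4)
      = fun t => (∑ n ∈ Finset.range 1, (1 : ℝ) * t ^ n) * log t ^ 4 := by
    simp
  have i₂ := integrableOn_sum_mul_log_pow (fun n => (-1 : ℝ) ^ n / n.factorial) 5 2
  have i₃ := integrableOn_sum_mul_log_pow (fun n => (-1 : ℝ) ^ n) 2 3
  have i₄ := integrableOn_sum_mul_log_pow (fun _ => 1) 1 4
  rw [← h₂] at i₂
  rw [← h₃] at i₃
  rw [← h₄] at i₄
  have hint := (i₂.fun_add (i₃.const_mul x)).fun_add (i₄.const_mul (x ^ 2 / 2))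
  calc ∫ t in Ioc 0 1, secondDiffIntegrand x t
      ≤ ∫ t in Ioc 0 1, x ^ 2 * ((1 - t + t ^ 2 / 2 - t ^ 3 / 6 + t ^ 4 / 24) * log t ^ 2
          + x * ((1 - t) * log t ^ 3) + x ^ 2 / 2 * log t ^ 4) :=
        setIntegral_mono_on ((integrableOn_secondDiffIntegrand (by linarith)).mono_set
          Ioc_subset_Ioi_self) (hint.const_mul _) measurableSet_Ioc
          fun t ht => secondDiffIntegrand_le_of_le_one hx ht.1 ht.2
    _ = x ^ 2 * (385019 / 216000 - 45 / 8 * x + 12 * x ^ 2) := by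
        rw [integral_const_mul, integral_add (i₂.fun_add (i₃.const_mul x)) (i₄.const_mul _),
          integral_add i₂ (i₃.const_mul x), integral_const_mul, integral_const_mul, h₂, h₃, h₄]
        congr 1
        simp only [integral_sum_mul_log_pow]
        norm_num [Finset.sum_range_succ, Nat.factorial]
        ring

-- Tangent lines of `log` at `e^{1/2}` and `e^{7/6}`, with the slopes rounded up.

lemma log_le_neg_one_half_add {t : ℝ} (ht : 0 < t) : log t ≤ -1 / 2 + 61 / 100 * t := by
  refine log_le_of_exp_neg_one_sub_le ?_ ht
  have h : exp (-1 - (-1 / 2)) ^ 2 = exp (-1) := by rw [← exp_nat_mul]; norm_num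
  refine le_of_pow_le_pow_left₀ two_ne_zero (by norm_num) (h ▸ ?_)
  linarith [exp_neg_one_lt_d9]

lemma log_le_one_sixth_add {t : ℝ} (ht : 0 < t) : log t ≤ 1 / 6 + 39 / 125 * t := by
  refine log_le_of_exp_neg_one_sub_le ?_ ht
  have h : exp (-1 - 1 / 6) ^ 6 = exp (-1) ^ 7 := by
    rw [← exp_nat_mul, ← exp_nat_mul]; norm_num
  refine le_of_pow_le_pow_left₀ (n := 6) (by norm_num) (by norm_num) ?_
  rw [h]
  calc exp (-1) ^ 7 ≤ (0.3678794412 : ℝ) ^ 7 :=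
        pow_le_pow_left₀ (exp_pos _).le exp_neg_one_lt_d9.le 7
    _ ≤ (39 / 125) ^ 6 := by norm_num

lemma integral_Ioc_one_two_secondDiffIntegrand_le {x : ℝ} (hx₀ : 0 ≤ x) (hx₁ : 3 * x ≤ 1) :
    ∫ t in Ioc 1 2, secondDiffIntegrand x t
      ≤ x ^ 2 * ((1781 / 2000 + 793441 / 187500 * x) * exp (-1)
        - (2141 / 1000 + 986959 / 93750 * x) * exp (-2)) := by
  have hcubic : ∀ t : ℝ, ((-1 / 2 + 61 / 100 * t) ^ 2
      + 3 * x * ((1 / 6 + 39 / 125 * t) ^ 2 * (t - 1))) * exp (-t)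
      = ((1 / 4 - x / 12) + (-61 / 100 - 343 / 1500 * x) * t
        + (3721 / 10000 + 312 / 15625 * x) * t ^ 2 + 4563 / 15625 * x * t ^ 3) * exp (-t) := by
    intro t; ring
  refine (setIntegral_secondDiffIntegrand_le hx₀ hx₁ measurableSet_Ioc (fun t ht => ht.1.le)
    (fun t ht => log_le_neg_one_half_add (by linarith [ht.1]))
    (fun t ht => log_le_one_sixth_add (by linarith [ht.1]))
    (Continuous.integrableOn_Ioc (by fun_prop))).trans_eq ?_
  simp_rw [hcubic]
  rw [integral_Ioc_cubic_mul_exp_neg _ _ _ _ one_le_two]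
  simp only [cubicExpPrimitive]
  ring

lemma integral_Ioi_two_secondDiffIntegrand_le {x : ℝ} (hx₀ : 0 ≤ x) (hx₁ : 3 * x ≤ 1) :
    ∫ t in Ioi 2, secondDiffIntegrand x t
      ≤ x ^ 2 * ((147737 / 112500 + 986959 / 93750 * x) * exp (-2)) := by
  have hlog : ∀ t ∈ Ioi (2 : ℝ), log t ≤ 1 / 6 + 39 / 125 * t :=
    fun t ht => log_le_one_sixth_add (by linarith [mem_Ioi.1 ht])
  have hcubic : (fun t : ℝ => ((1 / 6 + 39 / 125 * t) ^ 2
      + 3 * x * ((1 / 6 + 39 / 125 * t) ^ 2 * (t - 1))) * exp (-t))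
      = fun t => ((1 / 36 - x / 12) + (13 / 125 - 343 / 1500 * x) * t
        + (1521 / 15625 + 312 / 15625 * x) * t ^ 2 + 4563 / 15625 * x * t ^ 3) * exp (-t) := by
    ext t; ring
  refine (setIntegral_secondDiffIntegrand_le hx₀ hx₁ measurableSet_Ioi
    (fun t ht => mem_Ici.2 (by linarith [mem_Ioi.1 ht])) hlog hlog
    (hcubic ▸ integrableOn_Ioi_cubic_mul_exp_neg _ _ _ _ 2)).trans_eq ?_
  rw [hcubic, integral_Ioi_cubic_mul_exp_neg]
  simp only [cubicExpPrimitive]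
  ring

lemma second_diff_majorant_le_two {x : ℝ} (hx₀ : 0 ≤ x) (hx₁ : x ≤ 1 / 5) :
    (385019 / 216000 - 45 / 8 * x + 12 * x ^ 2)
      + ((1781 / 2000 + 793441 / 187500 * x) * exp (-1)
        - (2141 / 1000 + 986959 / 93750 * x) * exp (-2))
      + (147737 / 112500 + 986959 / 93750 * x) * exp (-2) ≤ 2 := by
  have he₁ := exp_neg_one_lt_d9
  have he₂ : exp (-2) = exp (-1) ^ 2 := by rw [← exp_nat_mul]; norm_num
  nlinarith [exp_neg_one_gt_d9]

lemma gamma_second_diff_le {x : ℝ} (hx₀ : 0 ≤ x) (hx₁ : x ≤ 1 / 5) :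
    Gamma (1 + 3 * x) - 2 * Gamma (1 + 2 * x) + Gamma (1 + x) ≤ 2 * x ^ 2 := by
  have hint := integrableOn_secondDiffIntegrand (x := x) (by linarith)
  have h3x : 3 * x ≤ 1 := by linarith
  rw [gamma_second_diff_eq_integral (by linarith), setIntegral_Ioi_eq_add zero_le_one hint,
    setIntegral_Ioi_eq_add one_le_two (hint.mono_set (Ioi_subset_Ioi zero_le_one))]
  calc _ ≤ x ^ 2 * (385019 / 216000 - 45 / 8 * x + 12 * x ^ 2)
        + (x ^ 2 * ((1781 / 2000 + 793441 / 187500 * x) * exp (-1)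
          - (2141 / 1000 + 986959 / 93750 * x) * exp (-2))
        + x ^ 2 * ((147737 / 112500 + 986959 / 93750 * x) * exp (-2))) :=
        add_le_add (integral_Ioc_zero_one_secondDiffIntegrand_le hx₀)
          (add_le_add (integral_Ioc_one_two_secondDiffIntegrand_le hx₀ h3x)
            (integral_Ioi_two_secondDiffIntegrand_le hx₀ h3x))
    _ ≤ 2 * x ^ 2 := by nlinarith [second_diff_majorant_le_two hx₀ hx₁, sq_nonneg x]

lemma deriv_second_diff_comp_eq_zero {f : ℝ → ℝ} {a : ℝ} (hf : DifferentiableAt ℝ f a) :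
    deriv (fun x => f (a + 3 * x) - 2 * f (a + 2 * x) + f (a + x)) 0 = 0 := by
  have h (c : ℝ) : HasDerivAt (fun x => f (a + c * x)) (deriv f a * c) 0 := by
    have hin : HasDerivAt (fun x => a + c * x) c 0 := by
      simpa using ((hasDerivAt_id (0 : ℝ)).const_mul c).const_add a
    exact (by simpa using hf.hasDerivAt : HasDerivAt f (deriv f a) (a + c * 0)).comp 0 hin
  have h₁ : HasDerivAt (fun x => f (a + x)) (deriv f a * 1) 0 := by simpa using h 1
  rw [((h 3).fun_sub ((h 2).const_mul 2)).fun_add h₁ |>.deriv]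
  ring

end GammaSecondDifference

theorem gamma_combination_bound :
    (fun x : ℝ => Real.Gamma (1 + 3 * x) - 2 * Real.Gamma (1 + 2 * x) + Real.Gamma (1 + x)) 0 = 0 ∧
    deriv (fun x : ℝ => Real.Gamma (1 + 3 * x) - 2 * Real.Gamma (1 + 2 * x) + Real.Gamma (1 + x)) 0 = 0 ∧
    ∀ x : ℝ, 0 < x → x < 1 / 5 →
      Real.Gamma (1 + 3 * x) - 2 * Real.Gamma (1 + 2 * x) + Real.Gamma (1 + x) ≤ 2 * x ^ 2 := by
  refine ⟨by norm_num, ?_, fun x hx₀ hx₁ =>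
    GammaSecondDifference.gamma_second_diff_le hx₀.le hx₁.le⟩
  exact GammaSecondDifference.deriv_second_diff_comp_eq_zero
    (differentiableAt_Gamma fun m => by linarith [m.cast_nonneg (α := ℝ)])
end

section
/- Fix p ∈ (1, ∞) and let g_p(x) = p·Γ(1+1/p)^(-1)·x^p·e^(-x^p) for x > 0. Then for all x > 0, g_p(x) ≥ (p/4)·𝟙_{[1-1/(2p), 1]}(x). -/
open Real Set

/-!
Both estimates come from convexity: `Γ` is convex, so `Γ (1 + 1/p) ≤ max (Γ 1) (Γ 2) = 1`;
and `exp t - 4 t` is convex, nonpositive at `t = 1/2` and `t = 1`, so `t e^{-t} ≥ 1/4` for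
`t = x ^ p`, which lies in `[1/2, 1]` by Bernoulli's inequality.
-/

theorem Real.Gamma_one_add_le_one {s : ℝ} (hs : s ∈ Icc (0 : ℝ) 1) : Gamma (1 + s) ≤ 1 := by
  have h := convexOn_Gamma.le_max_of_mem_Icc (x := 1) (y := 2) (z := 1 + s)
    (by norm_num) (by norm_num) ⟨by linarith [hs.1], by linarith [hs.2]⟩
  simpa only [Gamma_one, Gamma_two, max_self] using h

theorem Real.exp_le_four_mul {t : ℝ} (ht : t ∈ Icc (1 / 2 : ℝ) 1) : exp t ≤ 4 * t := by
  have hconv : ConvexOn ℝ univ (fun t => exp t - 4 * t) :=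
    convexOn_exp.sub ((concaveOn_id convex_univ).smul (by norm_num : (0 : ℝ) ≤ 4))
  have hhalf : exp (1 / 2) ≤ 2 := by
    have hsq : exp (1 / 2) * exp (1 / 2) = exp 1 := by rw [← exp_add]; norm_num
    nlinarith [exp_one_lt_three, exp_pos (1 / 2)]
  have h := hconv.le_max_of_mem_Icc (mem_univ _) (mem_univ _) ht
  have hends : max (exp (1 / 2) - 4 * (1 / 2)) (exp 1 - 4 * 1) ≤ 0 :=
    max_le (by linarith) (by linarith [exp_one_lt_three])
  linarith

theorem half_le_rpow_of_one_sub_inv_two_mul_le {p x : ℝ} (hp : 1 ≤ p)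
    (hx : 1 - 1 / (2 * p) ≤ x) : 1 / 2 ≤ x ^ p := by
  have hs : -1 ≤ -(1 / (2 * p)) := by
    rw [neg_le_neg_iff, div_le_one (by linarith)]; linarith
  have hbernoulli := one_add_mul_self_le_rpow_one_add hs hp
  calc 1 / 2 = 1 + p * -(1 / (2 * p)) := by field_simp; ring
    _ ≤ (1 - 1 / (2 * p)) ^ p := by simpa [← sub_eq_add_neg] using hbernoulli
    _ ≤ x ^ p := rpow_le_rpow (by linarith) hx (by linarith)

theorem density_lower_bound_sections (p : ℝ) (hp : 1 < p) :
    ∀ x : ℝ, 0 < x →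
      (Set.Icc (1 - 1 / (2 * p)) 1).indicator (fun _ => p / 4) x ≤
        p * (Real.Gamma (1 + 1 / p))⁻¹ * x ^ p * Real.exp (-(x ^ p)) := by
  intro x hx
  have hp0 : 0 < p := by linarith
  by_cases hmem : x ∈ Icc (1 - 1 / (2 * p)) 1
  · rw [indicator_of_mem hmem]
    have ht : x ^ p ∈ Icc (1 / 2 : ℝ) 1 :=
      ⟨half_le_rpow_of_one_sub_inv_two_mul_le hp.le hmem.1, rpow_le_one hx.le hmem.2 hp0.le⟩
    have hGamma : 1 ≤ (Gamma (1 + 1 / p))⁻¹ :=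
      (one_le_inv₀ (Gamma_pos_of_pos (by positivity))).mpr
        (Gamma_one_add_le_one ⟨by positivity, (div_le_one hp0).mpr hp.le⟩)
    have hdensity : 1 / 4 ≤ x ^ p * exp (-(x ^ p)) := by
      rw [exp_neg, ← div_eq_mul_inv, le_div_iff₀ (exp_pos _)]
      linarith [exp_le_four_mul ht]
    calc p / 4 = p * 1 * (1 / 4) := by ring
      _ ≤ p * (Gamma (1 + 1 / p))⁻¹ * (x ^ p * exp (-(x ^ p))) := by gcongr
      _ = _ := by ring
  · rw [indicator_of_notMem hmem]
    positivity
end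

section
/- Fix q ∈ (1, 3/2) and let f_q(x) = ((q-1)·Γ(1+1/q))^(-1)·x^((2-q)/(q-1))·e^(-x^(q/(q-1))) for x > 0. Then f_q(x) ≥ (1/(4(q-1)))·𝟙_{[1-(q-1)/2, 1]}(x) for all x > 0. -/
open Real

set_option maxHeartbeats 800000

theorem density_lower_bound_projections (q : ℝ) (hq₁ : 1 < q) (hq₂ : q < 3 / 2) :
    ∀ x : ℝ, 0 < x →
      (Set.Icc (1 - (q - 1) / 2) 1).indicator (fun _ => 1 / (4 * (q - 1))) x ≤
        ((q - 1) * Real.Gamma (1 + 1 / q))⁻¹ * x ^ ((2 - q) / (q - 1)) *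
          Real.exp (-(x ^ (q / (q - 1)))) := by
  intro x hx
  have hq1 : (0:ℝ) < q - 1 := by linarith
  have hqpos : (0:ℝ) < q := by linarith
  have hΓpos : 0 < Real.Gamma (1 + 1/q) := Real.Gamma_pos_of_pos (by positivity)
  have hrpos : 0 < ((q - 1) * Real.Gamma (1 + 1 / q))⁻¹ * x ^ ((2 - q) / (q - 1)) *
          Real.exp (-(x ^ (q / (q - 1)))) := by positivity
  by_cases hmem : x ∈ Set.Icc (1 - (q - 1) / 2) 1
  · rw [Set.indicator_of_mem hmem]
    obtain ⟨hx1, hx2⟩ := hmem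
    -- Gamma(1+1/q) ≤ 1 by convexity of Gamma on (0,∞)
    have hΓ1 : Real.Gamma (1 + 1/q) ≤ 1 := by
      have h1q : 1/q < 1 := by
        rw [div_lt_one hqpos]; linarith
      have h1q' : 0 < 1/q := by positivity
      have hw1 : (0:ℝ) ≤ 1 - 1/q := by linarith
      have hw2 : (0:ℝ) ≤ 1/q := by linarith
      have hw3 : (1 - 1/q) + 1/q = 1 := by ring
      have := Real.convexOn_Gamma.2
        (by norm_num : (1:ℝ) ∈ Set.Ioi 0) (by norm_num : (2:ℝ) ∈ Set.Ioi 0)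
        hw1 hw2 hw3
      simp only [smul_eq_mul, mul_one] at this
      have heq : 1 - 1/q + 1/q * 2 = 1 + 1/q := by ring
      rw [heq] at this
      calc Real.Gamma (1 + 1/q) ≤ (1 - 1/q) * Real.Gamma 1 + (1/q) * Real.Gamma 2 := this
        _ = 1 := by rw [Real.Gamma_one, Real.Gamma_two]; ring
    set a := (2 - q)/(q - 1) with ha_def
    set c := q/(q - 1) with hc_def
    have ha1 : 1 ≤ a := by
      rw [ha_def, le_div_iff₀ hq1]; linarith
    have ha0 : 0 ≤ a := by linarith
    have hx0 : (0:ℝ) < 1 - (q-1)/2 := by linarith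
    set u := x ^ a with hu_def
    -- lower bound on u via Bernoulli
    have hu_lb : q/2 ≤ u := by
      have hb : 1 + a * (-((q-1)/2)) ≤ (1 + (-((q-1)/2))) ^ a :=
        one_add_mul_self_le_rpow_one_add (by linarith) ha1
      have h1 : 1 + a * (-((q-1)/2)) = q/2 := by
        rw [ha_def]; field_simp; ring
      have h2 : (1 + (-((q-1)/2)) : ℝ) = 1 - (q-1)/2 := by ring
      rw [h1, h2] at hb
      calc q/2 ≤ (1 - (q-1)/2) ^ a := hb
        _ ≤ x ^ a := Real.rpow_le_rpow hx0.le hx1 ha0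
    have hu1 : u ≤ 1 := Real.rpow_le_one hx.le hx2 ha0
    have hu_half : (1:ℝ)/2 ≤ u := by linarith
    -- exp(-x^c) ≥ exp(-u)
    have hcu : x ^ c ≤ u := by
      rw [hu_def]
      exact Real.rpow_le_rpow_of_exponent_ge hx hx2 (by rw [ha_def, hc_def]; rw [div_le_div_iff₀ hq1 hq1]; nlinarith)
    have hexp : Real.exp (-u) ≤ Real.exp (-(x ^ c)) := Real.exp_le_exp.2 (by linarith)
    -- key: u * exp(-u) ≥ 1/4, i.e. exp u ≤ 4u
    have hkey : Real.exp u ≤ 4 * u := by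
      have h1 : (3:ℝ)/2 - u ≤ Real.exp (1/2 - u) := by
        have := Real.add_one_le_exp (1/2 - u); linarith
      have h2 : Real.exp (-(1:ℝ)/2) * Real.exp ((1:ℝ)/2) = 1 := by
        rw [← Real.exp_add]; norm_num
      have h3 : (1:ℝ)/2 ≤ Real.exp (-(1:ℝ)/2) := by
        have := Real.add_one_le_exp (-(1:ℝ)/2); linarith
      have h4 : Real.exp (1/2 - u) * Real.exp u = Real.exp (1/2) := by
        rw [← Real.exp_add]; congr 1; ring
      have hup : 0 < Real.exp u := Real.exp_pos u
      have h32 : 0 < (3:ℝ)/2 - u := by linarith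
      -- (3/2 - u) * exp u ≤ exp(1/2) ≤ 2
      have h5 : (3/2 - u) * Real.exp u ≤ Real.exp (1/2) := by
        calc (3/2 - u) * Real.exp u ≤ Real.exp (1/2 - u) * Real.exp u :=
              mul_le_mul_of_nonneg_right h1 hup.le
          _ = Real.exp (1/2) := h4
      have h6 : Real.exp (1/2) ≤ 2 := by
        nlinarith [h2, h3, Real.exp_pos ((1:ℝ)/2)]
      -- so exp u ≤ 2/(3/2-u) ≤ 4u since (2u-1)(u-1) ≤ 0
      nlinarith [mul_nonneg (mul_nonneg (by linarith : (0:ℝ) ≤ 2*u-1) (by linarith : (0:ℝ) ≤ 1-u)) hup.le]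
    have huexp : (1:ℝ)/4 ≤ u * Real.exp (-u) := by
      have hup : 0 < Real.exp u := Real.exp_pos u
      rw [Real.exp_neg, ← div_eq_mul_inv, le_div_iff₀ hup]
      nlinarith
    -- assemble
    have hfin : (1:ℝ)/4 ≤ u * Real.exp (-(x ^ c)) := by
      calc (1:ℝ)/4 ≤ u * Real.exp (-u) := huexp
        _ ≤ u * Real.exp (-(x ^ c)) := by
            apply mul_le_mul_of_nonneg_left hexp (by linarith)
    have hinv : (q-1)⁻¹ ≤ ((q - 1) * Real.Gamma (1 + 1/q))⁻¹ := by
      apply inv_anti₀ (by positivity)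
      exact mul_le_of_le_one_right hq1.le hΓ1
    calc 1 / (4 * (q - 1)) = (q-1)⁻¹ * (1/4) := by field_simp
      _ ≤ ((q - 1) * Real.Gamma (1 + 1/q))⁻¹ * (u * Real.exp (-(x ^ c))) :=
          mul_le_mul hinv hfin (by norm_num) (by positivity)
      _ = ((q - 1) * Real.Gamma (1 + 1 / q))⁻¹ * x ^ a * Real.exp (-(x ^ c)) := by
          rw [hu_def]; ring
  · rw [Set.indicator_of_notMem hmem]
    exact hrpos.le
end

section
/- For 1 < q < 2, if X has density γ_q^(-1)·|x|^((2-q)/(q-1))·e^(-|x|^(q/(q-1))) on ℝ with γ_q = 2(q-1)Γ(1+1/q), then E|X - sgn(X)|² ≤ 9·(1 - 1/q)². -/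
/-!
Put `p = q / (q - 1) > 2`. The substitution `y = |x|` turns the left side into
`2 c ∫_0^∞ (y - 1)² y^(p-2) e^(-y^p) dy` with `c⁻¹ = 2 Γ(1/q) / p`, and `Γ(1/q) ≥ 1`
since `Γ` decreases on `(0, 1]`. Split the integral at `1`. On `(0, 1]` drop the exponential:
`∫_0^1 (1 - y)² y^(p-2) dy = 2 / ((p - 1) p (p + 1))`. On `(1, ∞)` Bernoulli's inequality
`y - 1 ≤ (y^p - 1) / p` bounds the integrand by `p⁻² y^(p-1) (y^p - 1)² e^(-y^p)`, which has
an elementary antiderivative and integral `2 / (e p)`. So the integral is at most `4 / p³`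
and the left side at most `4 / p² ≤ 9 (1 - 1/q)²`.
-/

open Real MeasureTheory Set Filter

lemma integral_one_sub_sq_mul_rpow {p : ℝ} (hp : 1 < p) :
    ∫ x in (0 : ℝ)..1, (1 - x) ^ 2 * x ^ (p - 2) = 2 / ((p - 1) * p * (p + 1)) := by
  have hexpand : ∀ x ∈ uIcc (0 : ℝ) 1,
      (1 - x) ^ 2 * x ^ (p - 2) = x ^ (p - 2) - 2 * x ^ (p - 1) + x ^ p := by
    intro x hx
    rw [uIcc_of_le zero_le_one] at hx
    have h1 : x ^ (p - 1) = x ^ (p - 2) * x := by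
      rw [← rpow_add_one' hx.1 (by linarith)]; ring_nf
    have h2 : x ^ p = x ^ (p - 1) * x := by
      rw [← rpow_add_one' hx.1 (by linarith)]; ring_nf
    rw [h2, h1]
    ring
  have hint : ∀ r : ℝ, -1 < r → IntervalIntegrable (fun x : ℝ => x ^ r) volume 0 1 :=
    fun r hr => intervalIntegral.intervalIntegrable_rpow' hr
  have h₀ := hint (p - 2) (by linarith)
  have h₁ := (hint (p - 1) (by linarith)).const_mul 2
  have h₂ := hint p (by linarith)
  rw [intervalIntegral.integral_congr hexpand, intervalIntegral.integral_add (h₀.sub h₁) h₂,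
    intervalIntegral.integral_sub h₀ h₁, intervalIntegral.integral_const_mul,
    integral_rpow (by left; linarith), integral_rpow (by left; linarith),
    integral_rpow (by left; linarith), show p - 2 + 1 = p - 1 by ring,
    show p - 1 + 1 = p by ring, one_rpow, one_rpow, one_rpow,
    zero_rpow (by linarith), zero_rpow (by linarith), zero_rpow (by linarith)]
  have : p - 1 ≠ 0 := by linarith
  have : p + 1 ≠ 0 := by linarith
  have : p ≠ 0 := by linarith
  field_simp
  ring

lemma hasDerivAt_rpow_sq_add_one_mul_exp {p x : ℝ} (hp : p ≠ 0) (hx : 0 < x) :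
    HasDerivAt (fun y => -((y ^ p) ^ 2 + 1) * exp (-y ^ p) / p)
      (x ^ (p - 1) * (x ^ p - 1) ^ 2 * exp (-x ^ p)) x := by
  have hpow : HasDerivAt (fun y : ℝ => y ^ p) (p * x ^ (p - 1)) x :=
    hasDerivAt_rpow_const (Or.inl hx.ne')
  refine ((((hpow.fun_pow 2).add_const 1).fun_neg.fun_mul hpow.fun_neg.exp).div_const p
    ).congr_deriv ?_
  field_simp
  ring

lemma integrableOn_and_integral_Ioi_one_rpow_mul_sq_mul_exp {p : ℝ} (hp : 0 < p) :
    IntegrableOn (fun x => x ^ (p - 1) * (x ^ p - 1) ^ 2 * exp (-x ^ p)) (Ioi 1) ∧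
      ∫ x in Ioi 1, x ^ (p - 1) * (x ^ p - 1) ^ 2 * exp (-x ^ p) = 2 * exp (-1) / p := by
  have hderiv : ∀ x ∈ Ici (1 : ℝ), HasDerivAt (fun y => -((y ^ p) ^ 2 + 1) * exp (-y ^ p) / p)
      (x ^ (p - 1) * (x ^ p - 1) ^ 2 * exp (-x ^ p)) x :=
    fun x hx => hasDerivAt_rpow_sq_add_one_mul_exp hp.ne' (zero_lt_one.trans_le hx)
  have hnonneg : ∀ x ∈ Ioi (1 : ℝ), 0 ≤ x ^ (p - 1) * (x ^ p - 1) ^ 2 * exp (-x ^ p) :=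
    fun x hx => by have : 0 < x := zero_lt_one.trans hx; positivity
  have hlim : Tendsto (fun y => -((y ^ p) ^ 2 + 1) * exp (-y ^ p) / p) atTop (nhds 0) := by
    have h := ((tendsto_pow_mul_exp_neg_atTop_nhds_zero 2).add
      tendsto_exp_neg_atTop_nhds_zero).neg.div_const p
    rw [add_zero, neg_zero, zero_div] at h
    refine (h.comp (tendsto_rpow_atTop hp)).congr fun y => ?_
    simp only [Function.comp]
    ring
  refine ⟨integrableOn_Ioi_deriv_of_nonneg' hderiv hnonneg hlim, ?_⟩
  rw [integral_Ioi_of_hasDerivAt_of_nonneg' hderiv hnonneg hlim, one_rpow]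
  ring

lemma sq_sub_one_mul_rpow_le {p x : ℝ} (hp : 1 ≤ p) (hx : 1 ≤ x) :
    (x - 1) ^ 2 * x ^ (p - 2) ≤ x ^ (p - 1) * (x ^ p - 1) ^ 2 / p ^ 2 := by
  have hbernoulli : p * (x - 1) ≤ x ^ p - 1 := by
    have := one_add_mul_self_le_rpow_one_add (by linarith : -1 ≤ x - 1) hp
    rw [add_sub_cancel] at this
    linarith
  have hsq : (x - 1) ^ 2 ≤ (x ^ p - 1) ^ 2 / p ^ 2 := by
    rw [le_div_iff₀ (by positivity), ← mul_pow, mul_comm]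
    exact pow_le_pow_left₀ (by nlinarith) hbernoulli 2
  have hpow : x ^ (p - 2) ≤ x ^ (p - 1) := rpow_le_rpow_of_exponent_le hx (by linarith)
  calc (x - 1) ^ 2 * x ^ (p - 2) ≤ (x ^ p - 1) ^ 2 / p ^ 2 * x ^ (p - 1) :=
        mul_le_mul hsq hpow (by positivity) (by positivity)
    _ = x ^ (p - 1) * (x ^ p - 1) ^ 2 / p ^ 2 := by ring

lemma integrableOn_and_integral_Ioc_zero_one_sq_sub_one_mul_rpow_mul_exp_le {p : ℝ}
    (hp : 1 < p) :
    IntegrableOn (fun x => (x - 1) ^ 2 * x ^ (p - 2) * exp (-x ^ p)) (Ioc 0 1) ∧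
      ∫ x in Ioc 0 1, (x - 1) ^ 2 * x ^ (p - 2) * exp (-x ^ p)
        ≤ 2 / ((p - 1) * p * (p + 1)) := by
  have hg_int : IntegrableOn (fun x : ℝ => (1 - x) ^ 2 * x ^ (p - 2)) (Ioc 0 1) := by
    have := (intervalIntegral.intervalIntegrable_rpow' (a := 0) (b := 1)
      (by linarith : -1 < p - 2)).continuousOn_mul (g := fun x : ℝ => (1 - x) ^ 2)
      (by fun_prop)
    exact (intervalIntegrable_iff_integrableOn_Ioc_of_le zero_le_one).1 this
  have hle : ∀ x ∈ Ioc (0 : ℝ) 1,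
      (x - 1) ^ 2 * x ^ (p - 2) * exp (-x ^ p) ≤ (1 - x) ^ 2 * x ^ (p - 2) := fun x hx => by
    have hx0 := hx.1
    calc (x - 1) ^ 2 * x ^ (p - 2) * exp (-x ^ p) ≤ (x - 1) ^ 2 * x ^ (p - 2) * 1 := by
          gcongr; exact exp_le_one_iff.2 (neg_nonpos.2 (rpow_pos_of_pos hx0 p).le)
      _ = (1 - x) ^ 2 * x ^ (p - 2) := by ring
  have hf_int : IntegrableOn (fun x => (x - 1) ^ 2 * x ^ (p - 2) * exp (-x ^ p)) (Ioc 0 1) :=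
    hg_int.mono' (by fun_prop) <| (ae_restrict_iff' measurableSet_Ioc).2 <| .of_forall
      fun x hx => by
        have hx0 := hx.1
        rw [norm_of_nonneg (by positivity)]; exact hle x hx
  refine ⟨hf_int, ?_⟩
  calc _ ≤ ∫ x in Ioc 0 1, (1 - x) ^ 2 * x ^ (p - 2) :=
        setIntegral_mono_on hf_int hg_int measurableSet_Ioc hle
    _ = 2 / ((p - 1) * p * (p + 1)) := by
        rw [← intervalIntegral.integral_of_le zero_le_one, integral_one_sub_sq_mul_rpow hp]

lemma integrableOn_and_integral_Ioi_one_sq_sub_one_mul_rpow_mul_exp_le {p : ℝ} (hp : 1 ≤ p) :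
    IntegrableOn (fun x => (x - 1) ^ 2 * x ^ (p - 2) * exp (-x ^ p)) (Ioi 1) ∧
      ∫ x in Ioi 1, (x - 1) ^ 2 * x ^ (p - 2) * exp (-x ^ p) ≤ 2 * exp (-1) / p ^ 3 := by
  obtain ⟨htail_int, htail⟩ :=
    integrableOn_and_integral_Ioi_one_rpow_mul_sq_mul_exp (by linarith : 0 < p)
  have hle : ∀ x ∈ Ioi (1 : ℝ), (x - 1) ^ 2 * x ^ (p - 2) * exp (-x ^ p)
      ≤ x ^ (p - 1) * (x ^ p - 1) ^ 2 * exp (-x ^ p) / p ^ 2 := fun x hx => by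
    have := mul_le_mul_of_nonneg_right (sq_sub_one_mul_rpow_le hp hx.le) (exp_pos (-x ^ p)).le
    rwa [div_mul_eq_mul_div] at this
  have hf_int : IntegrableOn (fun x => (x - 1) ^ 2 * x ^ (p - 2) * exp (-x ^ p)) (Ioi 1) :=
    (htail_int.div_const _).mono' (by fun_prop) <| (ae_restrict_iff' measurableSet_Ioi).2 <|
      .of_forall fun x hx => by
        have hx0 : 0 < x := zero_lt_one.trans hx
        rw [norm_of_nonneg (by positivity)]; exact hle x hx
  refine ⟨hf_int, ?_⟩
  calc _ ≤ ∫ x in Ioi 1, x ^ (p - 1) * (x ^ p - 1) ^ 2 * exp (-x ^ p) / p ^ 2 :=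
        setIntegral_mono_on hf_int (htail_int.div_const _) measurableSet_Ioi hle
    _ = 2 * exp (-1) / p ^ 3 := by
        rw [integral_div, htail]; field_simp

lemma integral_Ioi_sq_sub_one_mul_rpow_mul_exp_le {p : ℝ} (hp : 1 < p) :
    ∫ x in Ioi 0, (x - 1) ^ 2 * x ^ (p - 2) * exp (-x ^ p)
      ≤ 2 / ((p - 1) * p * (p + 1)) + 2 * exp (-1) / p ^ 3 := by
  obtain ⟨hint_Ioc, hle_Ioc⟩ :=
    integrableOn_and_integral_Ioc_zero_one_sq_sub_one_mul_rpow_mul_exp_le hp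
  obtain ⟨hint_Ioi, hle_Ioi⟩ :=
    integrableOn_and_integral_Ioi_one_sq_sub_one_mul_rpow_mul_exp_le hp.le
  rw [← Ioc_union_Ioi_eq_Ioi zero_le_one,
    setIntegral_union (Ioc_disjoint_Ioi le_rfl) measurableSet_Ioi hint_Ioc hint_Ioi]
  exact add_le_add hle_Ioc hle_Ioi

lemma exp_neg_one_le_half : exp (-1) ≤ 1 / 2 := by
  rw [exp_neg, one_div]; exact inv_anti₀ two_pos (by linarith [add_one_le_exp 1])

lemma integral_Ioi_sq_sub_one_mul_rpow_mul_exp_le_of_two_le {p : ℝ} (hp : 2 ≤ p) :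
    ∫ x in Ioi 0, (x - 1) ^ 2 * x ^ (p - 2) * exp (-x ^ p) ≤ 4 / p ^ 3 := by
  have hp0 : 0 < p := by linarith
  have h_Ioc : 2 / ((p - 1) * p * (p + 1)) ≤ 8 / 3 / p ^ 3 := by
    rw [div_div, div_le_div_iff₀ (mul_pos (mul_pos (by linarith) hp0) (by linarith))
      (by positivity)]
    nlinarith [mul_nonneg hp0.le (by nlinarith : (0 : ℝ) ≤ p ^ 2 - 4)]
  have h_Ioi : 2 * exp (-1) / p ^ 3 ≤ 1 / p ^ 3 := by
    gcongr; linarith [exp_neg_one_le_half]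
  calc _ ≤ 2 / ((p - 1) * p * (p + 1)) + 2 * exp (-1) / p ^ 3 :=
        integral_Ioi_sq_sub_one_mul_rpow_mul_exp_le (by linarith)
    _ ≤ 8 / 3 / p ^ 3 + 1 / p ^ 3 := add_le_add h_Ioc h_Ioi
    _ ≤ 4 / p ^ 3 := by rw [← add_div]; gcongr; norm_num

lemma integral_sq_abs_sub_sign_mul_abs_rpow_mul {a : ℝ} (ha : a ≠ 0) (c : ℝ)
    (g : ℝ → ℝ) :
    ∫ x, |x - Real.sign x| ^ 2 * (c * |x| ^ a * g |x|)
      = 2 * c * ∫ y in Ioi 0, (y - 1) ^ 2 * y ^ a * g y := by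
  have hsign : ∀ x : ℝ, |x - Real.sign x| ^ 2 * |x| ^ a = (|x| - 1) ^ 2 * |x| ^ a := by
    intro x
    rcases lt_trichotomy x 0 with hx | rfl | hx
    · rw [Real.sign_of_neg hx, abs_of_neg hx, sq_abs]
      ring
    · simp [zero_rpow ha]
    · rw [Real.sign_of_pos hx, abs_of_pos hx, sq_abs]
  have hsymm : (fun x : ℝ => |x - Real.sign x| ^ 2 * (c * |x| ^ a * g |x|)) =
      fun x => c * ((|x| - 1) ^ 2 * |x| ^ a * g |x|) := by
    ext x
    linear_combination c * g |x| * hsign x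
  rw [hsymm, integral_comp_abs (f := fun y => c * ((y - 1) ^ 2 * y ^ a * g y)),
    integral_const_mul, mul_assoc]

lemma one_le_Gamma_of_le_one {s : ℝ} (hs : 0 < s) (hs1 : s ≤ 1) : 1 ≤ Gamma s :=
  Gamma_one ▸ Gamma_strictAntiOn_Ioc.antitoneOn ⟨hs, hs1⟩ ⟨one_pos, le_rfl⟩ hs1

theorem coupling_bound (q : ℝ) (hq₁ : 1 < q) (hq₂ : q < 2) :
    ∫ x : ℝ,
        |x - Real.sign x| ^ 2 *
          ((2 * (q - 1) * Real.Gamma (1 + 1 / q))⁻¹ * |x| ^ ((2 - q) / (q - 1)) *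
            Real.exp (-(|x| ^ (q / (q - 1)))))
      ≤ 9 * (1 - 1 / q) ^ 2 := by
  set p := q / (q - 1) with hp_def
  have hq0 : 0 < q - 1 := by linarith
  have hp : 2 < p := by rw [hp_def, lt_div_iff₀ hq0]; linarith
  have hexponent : (2 - q) / (q - 1) = p - 2 := by rw [hp_def]; field_simp; ring
  have hinv : 1 - 1 / q = p⁻¹ := by rw [hp_def]; field_simp
  have hnorm : 2 * (q - 1) * Gamma (1 + 1 / q) = 2 * Gamma (1 / q) / p := by
    rw [add_comm, Gamma_add_one (by positivity), hp_def]; field_simp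
  have hΓ : 1 ≤ Gamma (1 / q) :=
    one_le_Gamma_of_le_one (by positivity) ((div_le_one (by linarith)).2 hq₁.le)
  rw [hexponent, hnorm, hinv, integral_sq_abs_sub_sign_mul_abs_rpow_mul
    (by linarith : (0 : ℝ) < p - 2).ne' _ fun y => exp (-y ^ p)]
  calc 2 * (2 * Gamma (1 / q) / p)⁻¹ * ∫ y in Ioi 0, (y - 1) ^ 2 * y ^ (p - 2) * exp (-y ^ p)
      ≤ 2 * (2 * Gamma (1 / q) / p)⁻¹ * (4 / p ^ 3) := by
        gcongr; exact integral_Ioi_sq_sub_one_mul_rpow_mul_exp_le_of_two_le hp.le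
    _ = 4 / Gamma (1 / q) * p⁻¹ ^ 2 := by field_simp
    _ ≤ 9 * p⁻¹ ^ 2 := by
        gcongr
        exact (div_le_self (by norm_num) hΓ).trans (by norm_num)
end

section
/- Let 1 < q < 2, let X₁,...,X_n be i.i.d. with density γ_q^(-1)|x|^((2-q)/(q-1))e^(-|x|^(q/(q-1))) where γ_q = 2(q-1)Γ(1+1/q), and let ε₁,...,ε_n be i.i.d. Rademacher (uniform on {-1,1}). Then for every unit vector a ∈ ℝⁿ, |E|∑ aⱼXⱼ| - E|∑ aⱼεⱼ|| ≤ 3(1 - 1/q). -/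
/-!
Couple each `εⱼ` with `sgn Xⱼ`: the law of `Xⱼ` is symmetric and has no atom at `0`, so
`(sgn Xⱼ)ⱼ` is again an independent Rademacher family and `E|∑ aⱼ εⱼ| = E|∑ aⱼ sgn Xⱼ|`.
The difference of the two expectations is then at most `E|∑ aⱼ (Xⱼ - sgn Xⱼ)|`, and by
Cauchy–Schwarz and independence of the centred summands this is at most
`(E (X₁ - sgn X₁)²)^(1/2)`.

From `E|X₁|^p = Γ((p(q-1)+1)/q) / Γ(1/q)` one gets, with `s = 1 - 1/q`,
`E (X₁ - sgn X₁)² = (Γ(1+s) + Γ(1-s) - 2) / Γ(1-s)`. The numerator is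
`∫₀^∞ 2 (cosh (s log x) - 1) e^(-x) dx`, and `cosh (θu) - 1 ≤ θ² (cosh u - 1)` for `|θ| ≤ 1`
bounds it by `4 s² (Γ(3/2) + Γ(1/2) - 2) ≤ 4 s²`, while `Γ(1-s) ≥ 1`.
-/

open Real MeasureTheory ProbabilityTheory Set
open scoped ENNReal

theorem Real.sinh_mul_le_mul_sinh {θ v : ℝ} (hθ₀ : 0 ≤ θ) (hθ₁ : θ ≤ 1) (hv : 0 ≤ v) :
    sinh (θ * v) ≤ θ * sinh v := by
  have hderiv : ∀ w, HasDerivAt (fun w => θ * sinh w - sinh (θ * w))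
      (θ * (cosh w - cosh (θ * w))) w := fun w =>
    (((hasDerivAt_sinh w).const_mul θ).sub
      ((hasDerivAt_sinh (θ * w)).comp w ((hasDerivAt_id w).const_mul θ))).congr_deriv (by ring)
  have hmono : MonotoneOn (fun w => θ * sinh w - sinh (θ * w)) (Ici 0) := by
    refine monotoneOn_of_hasDerivWithinAt_nonneg (convex_Ici 0)
      (fun w _ => (hderiv w).continuousAt.continuousWithinAt)
      (fun w _ => (hderiv w).hasDerivWithinAt) fun w hw => ?_
    have hw : 0 ≤ w := (interior_subset hw : w ∈ Ici (0 : ℝ))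
    have : cosh (θ * w) ≤ cosh w := by
      rw [cosh_le_cosh, abs_of_nonneg (mul_nonneg hθ₀ hw), abs_of_nonneg hw]
      nlinarith
    nlinarith
  simpa using hmono self_mem_Ici hv hv

theorem Real.cosh_mul_sub_one_le {θ : ℝ} (hθ : |θ| ≤ 1) (u : ℝ) :
    cosh (θ * u) - 1 ≤ θ ^ 2 * (cosh u - 1) := by
  have half : ∀ v, cosh (2 * v) - 1 = 2 * sinh v ^ 2 := fun v => by
    rw [cosh_two_mul, cosh_sq]; ring
  have hsinh : |sinh (θ * (u / 2))| ≤ |θ| * |sinh (u / 2)| := by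
    rw [abs_sinh, abs_sinh, abs_mul]
    exact sinh_mul_le_mul_sinh (abs_nonneg _) hθ (abs_nonneg _)
  calc cosh (θ * u) - 1 = 2 * |sinh (θ * (u / 2))| ^ 2 := by
        rw [sq_abs, ← half]; ring_nf
    _ ≤ 2 * (|θ| * |sinh (u / 2)|) ^ 2 := by gcongr
    _ = θ ^ 2 * (cosh u - 1) := by
        rw [mul_pow, sq_abs, sq_abs, show cosh u = cosh (2 * (u / 2)) by ring_nf, half]; ring

theorem Real.rpow_add_rpow_neg_sub_two_le {s x : ℝ} (hs : |s| ≤ 1 / 2) (hx : 0 < x) :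
    x ^ s + x ^ (-s) - 2 ≤ 4 * s ^ 2 * (x ^ (1 / 2 : ℝ) + x ^ (-(1 / 2) : ℝ) - 2) := by
  have hcosh : ∀ t : ℝ, x ^ t + x ^ (-t) - 2 = 2 * (cosh (t * log x) - 1) := fun t => by
    rw [rpow_def_of_pos hx, rpow_def_of_pos hx, cosh_eq]; ring_nf
  have h2s : |2 * s| ≤ 1 := by rw [abs_mul, abs_two]; linarith
  have := cosh_mul_sub_one_le h2s (log x / 2)
  rw [hcosh, hcosh]
  calc 2 * (cosh (s * log x) - 1) = 2 * (cosh (2 * s * (log x / 2)) - 1) := by ring_nf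
    _ ≤ 2 * ((2 * s) ^ 2 * (cosh (log x / 2) - 1)) := by gcongr
    _ = _ := by ring_nf

theorem Real.integrableOn_rpow_mul_exp_neg {t : ℝ} (ht : -1 < t) :
    IntegrableOn (fun x : ℝ => x ^ t * exp (-x)) (Ioi 0) := by
  simpa using integrableOn_rpow_mul_exp_neg_rpow ht one_pos

theorem Real.integral_rpow_mul_exp_neg {t : ℝ} (ht : -1 < t) :
    ∫ x in Ioi (0 : ℝ), x ^ t * exp (-x) = Gamma (1 + t) := by
  simpa [add_comm] using integral_rpow_mul_exp_neg_rpow one_pos ht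

theorem Real.integrableOn_rpow_add_rpow_neg_sub_two_mul_exp_neg {t : ℝ} (ht : |t| < 1) :
    IntegrableOn (fun x : ℝ => (x ^ t + x ^ (-t) - 2) * exp (-x)) (Ioi 0) := by
  obtain ⟨ht₁, ht₂⟩ := abs_lt.mp ht
  refine IntegrableOn.congr_fun (((integrableOn_rpow_mul_exp_neg (t := t) (by linarith)).fun_add
    (integrableOn_rpow_mul_exp_neg (t := -t) (by linarith))).fun_sub
    ((integrableOn_exp_neg_Ioi 0).const_mul 2)) (fun x _ => by ring) measurableSet_Ioi

theorem Real.integral_rpow_add_rpow_neg_sub_two_mul_exp_neg {t : ℝ} (ht : |t| < 1) :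
    ∫ x in Ioi (0 : ℝ), (x ^ t + x ^ (-t) - 2) * exp (-x)
      = Gamma (1 + t) + Gamma (1 - t) - 2 := by
  obtain ⟨ht₁, ht₂⟩ := abs_lt.mp ht
  have hp := integrableOn_rpow_mul_exp_neg (t := t) (by linarith)
  have hn := integrableOn_rpow_mul_exp_neg (t := -t) (by linarith)
  have h₀ := (integrableOn_exp_neg_Ioi 0).const_mul 2
  simp_rw [sub_mul, add_mul]
  rw [integral_sub (hp.fun_add hn) h₀, integral_add hp hn, integral_const_mul,
    integral_rpow_mul_exp_neg (by linarith), integral_rpow_mul_exp_neg (by linarith),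
    integral_exp_neg_Ioi_zero, sub_eq_add_neg 1 t]
  ring

theorem Real.Gamma_one_add_add_Gamma_one_sub_le {s : ℝ} (hs : |s| ≤ 1 / 2) :
    Gamma (1 + s) + Gamma (1 - s) - 2 ≤ 4 * s ^ 2 := by
  have hΓ : Gamma (1 + 1 / 2) + Gamma (1 - 1 / 2) - 2 ≤ 1 := by
    have h32 := Gamma_three_div_two_lt_one
    have hsqrt : √π ≤ 2 := by
      rw [sqrt_le_left (by norm_num)]; linarith [pi_le_four]
    norm_num [Gamma_one_half_eq] at h32 ⊢
    linarith
  calc Gamma (1 + s) + Gamma (1 - s) - 2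
      = ∫ x in Ioi (0 : ℝ), (x ^ s + x ^ (-s) - 2) * exp (-x) :=
        (integral_rpow_add_rpow_neg_sub_two_mul_exp_neg (by linarith)).symm
    _ ≤ ∫ x in Ioi (0 : ℝ), 4 * s ^ 2 * ((x ^ (1 / 2 : ℝ) + x ^ (-(1 / 2) : ℝ) - 2) * exp (-x)) :=
        setIntegral_mono_on (integrableOn_rpow_add_rpow_neg_sub_two_mul_exp_neg (by linarith))
          ((integrableOn_rpow_add_rpow_neg_sub_two_mul_exp_neg (by norm_num)).const_mul _)
          measurableSet_Ioi fun x hx => by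
          rw [← mul_assoc]
          exact mul_le_mul_of_nonneg_right (rpow_add_rpow_neg_sub_two_le hs hx) (exp_pos _).le
    _ = 4 * s ^ 2 * (Gamma (1 + 1 / 2) + Gamma (1 - 1 / 2) - 2) := by
        rw [integral_const_mul, integral_rpow_add_rpow_neg_sub_two_mul_exp_neg (by norm_num)]
    _ ≤ 4 * s ^ 2 := by nlinarith [sq_nonneg s]

theorem MeasureTheory.IntegrableOn.integrable_comp_abs {g : ℝ → ℝ} (hg : IntegrableOn g (Ioi 0)) :
    Integrable fun x => g |x| := by
  have hIoi : IntegrableOn (fun x => g |x|) (Ioi 0) :=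
    hg.congr_fun (fun x hx => by rw [abs_of_pos (mem_Ioi.mp hx)]) measurableSet_Ioi
  have hIio : IntegrableOn (fun x => g |x|) (Iio 0) := by
    simpa [neg_Ioi] using hIoi.comp_neg
  simpa using hIio.union (Iff.mpr integrableOn_Ici_iff_integrableOn_Ioi hIoi)

theorem MeasureTheory.Measure.isNegInvariant_withDensity {G : Type*} [MeasurableSpace G]
    [InvolutiveNeg G] [MeasurableNeg G] (μ : Measure G) [μ.IsNegInvariant] {f : G → ℝ≥0∞}
    (hf : ∀ x, f (-x) = f x) : (μ.withDensity f).IsNegInvariant := by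
  refine ⟨Measure.ext fun s hs => ?_⟩
  rw [Measure.neg_apply, withDensity_apply _ hs.neg, withDensity_apply _ hs, ← neg_preimage]
  simpa [hf] using (Measure.measurePreserving_neg μ).setLIntegral_comp_preimage_emb
    (MeasurableEquiv.neg G).measurableEmbedding f s

-- Unlike `Real.sign`, this does not vanish at `0`, so `pmSign ∘ X` is exactly `±1`-valued.
noncomputable def pmSign (x : ℝ) : ℝ := if x < 0 then -1 else 1

noncomputable def rademacher : Measure ℝ := (2⁻¹ : ℝ≥0∞) • (Measure.dirac 1 + Measure.dirac (-1))

instance : IsProbabilityMeasure rademacher :=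
  ⟨by simp [rademacher, ENNReal.inv_two_add_inv_two]⟩

theorem measurable_pmSign : Measurable pmSign :=
  Measurable.ite measurableSet_Iio measurable_const measurable_const

theorem sub_pmSign_sq (x : ℝ) : (x - pmSign x) ^ 2 = x ^ 2 - 2 * |x| + 1 := by
  unfold pmSign
  split_ifs with h
  · rw [abs_of_neg h]; ring
  · rw [abs_of_nonneg (not_lt.mp h)]; ring

theorem memLp_pmSign (p : ℝ≥0∞) (ν : Measure ℝ) [IsFiniteMeasure ν] : MemLp pmSign p ν :=
  MemLp.of_bound measurable_pmSign.aestronglyMeasurable 1 <| ae_of_all _ fun x => by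
    unfold pmSign; split_ifs <;> simp

section Symmetric

variable (ν : Measure ℝ) [ν.IsNegInvariant]

theorem map_pmSign_eq_rademacher [IsProbabilityMeasure ν] (h₀ : ν {0} = 0) :
    ν.map pmSign = rademacher := by
  have hhalf : ν (Iio 0) = 2⁻¹ ∧ ν (Ici 0) = 2⁻¹ := by
    have hsymm : ν (Ici 0) = ν (Iio 0) := by
      rw [← measure_congr (Ioi_ae_eq_Ici' h₀), ← Measure.measure_neg ν (Iio 0), neg_Iio, neg_zero]
    have htotal : ν (Iio 0) + ν (Ici 0) = 1 := by
      rw [← compl_Iio, measure_add_measure_compl measurableSet_Iio, measure_univ]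
    rw [hsymm] at htotal ⊢
    have h := ENNReal.eq_inv_of_mul_eq_one_left (by rwa [mul_two])
    exact ⟨h, h⟩
  have hconst : ∀ (s : Set ℝ) (c : ℝ), MeasurableSet s → (∀ x ∈ s, pmSign x = c) →
      (ν.restrict s).map pmSign = ν s • Measure.dirac c := fun s c hs hc => by
    rw [Measure.map_congr (g := fun _ => c) ((ae_restrict_iff' hs).mpr (ae_of_all _ hc)),
      Measure.map_const, Measure.restrict_apply_univ]
  rw [← Measure.restrict_add_restrict_compl (μ := ν) measurableSet_Iio, Measure.map_add _ _
    measurable_pmSign, compl_Iio, hconst _ (-1) measurableSet_Iio fun x hx => if_pos hx,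
    hconst _ 1 measurableSet_Ici fun x hx => if_neg (not_lt.mpr hx), hhalf.1, hhalf.2,
    rademacher, smul_add, add_comm]

theorem integral_sub_pmSign_eq_zero (h₀ : ν {0} = 0) : ∫ x, (x - pmSign x) ∂ν = 0 := by
  have hodd : ∀ᵐ x ∂ν, -x - pmSign (-x) = -(x - pmSign x) := by
    have : ∀ᵐ x ∂ν, x ≠ 0 := by rw [ae_iff]; simpa using h₀
    filter_upwards [this] with x hx
    unfold pmSign
    rcases hx.lt_or_gt with h | h
    · simp [h, h.not_gt]; ring
    · simp [h.not_gt, neg_lt_zero.mpr h]; ring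
  have := integral_neg_eq_self (fun x => x - pmSign x) ν
  rw [integral_congr_ae hodd, integral_neg] at this
  linarith

end Symmetric

section Probability

variable {Ω : Type*} [MeasurableSpace Ω] {μ : Measure Ω}

theorem abs_integral_abs_sub_integral_abs_le {f g : Ω → ℝ} (hf : Integrable f μ)
    (hg : Integrable g μ) : |∫ ω, |f ω| ∂μ - ∫ ω, |g ω| ∂μ| ≤ ∫ ω, |f ω - g ω| ∂μ := by
  rw [← integral_sub hf.abs hg.abs]
  exact abs_integral_le_integral_abs.trans <| integral_mono (hf.abs.sub hg.abs).abs (hf.sub hg).abs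
    fun ω => abs_abs_sub_abs_le_abs_sub _ _

theorem integral_abs_le_sqrt_integral_sq [IsProbabilityMeasure μ] {f : Ω → ℝ} (hf : MemLp f 2 μ) :
    ∫ ω, |f ω| ∂μ ≤ √(∫ ω, f ω ^ 2 ∂μ) := by
  rw [le_sqrt (integral_nonneg fun _ => abs_nonneg _) (integral_nonneg fun _ => sq_nonneg _)]
  have := variance_nonneg |f| μ
  rw [variance_eq_sub hf.abs] at this
  simpa [sq_abs] using this

theorem integral_sq_sum_mul_of_iIndepFun {ι : Type*} [Fintype ι] [IsProbabilityMeasure μ]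
    {Z : ι → Ω → ℝ} (hZ : iIndepFun Z μ) (hZ₂ : ∀ j, MemLp (Z j) 2 μ)
    (hZ₀ : ∀ j, ∫ ω, Z j ω ∂μ = 0) (a : ι → ℝ) :
    ∫ ω, (∑ j, a j * Z j ω) ^ 2 ∂μ = ∑ j, a j ^ 2 * ∫ ω, Z j ω ^ 2 ∂μ := by
  have hvar := IndepFun.variance_sum (μ := μ) (X := fun j ω => a j * Z j ω) (s := Finset.univ)
    (fun j _ => (hZ₂ j).const_mul (a j))
    fun i _ j _ hij => (hZ.indepFun hij).comp (measurable_const_mul _) (measurable_const_mul _)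
  have hsum : (∑ j, fun ω => a j * Z j ω) = fun ω => ∑ j, a j * Z j ω := by ext ω; simp
  have hmean : ∫ ω, ∑ j, a j * Z j ω ∂μ = 0 := by
    rw [integral_finsetSum _ fun j _ => ((hZ₂ j).integrable one_le_two).const_mul _]
    simp [integral_const_mul, hZ₀]
  rw [hsum, variance_of_integral_eq_zero (Finset.aemeasurable_fun_sum _ fun j _ =>
    (hZ₂ j).aemeasurable.const_mul (a j)) hmean] at hvar
  simp only [hvar, variance_const_mul, variance_of_integral_eq_zero (hZ₂ _).aemeasurable (hZ₀ _)]

theorem ProbabilityTheory.iIndepFun.identDistrib_pi {ι : Type*} [Fintype ι] [IsProbabilityMeasure μ]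
    {X Y : ι → Ω → ℝ} (hX : iIndepFun X μ) (hY : iIndepFun Y μ) (hXm : ∀ j, AEMeasurable (X j) μ)
    (hYm : ∀ j, AEMeasurable (Y j) μ) (hXY : ∀ j, μ.map (X j) = μ.map (Y j)) :
    IdentDistrib (fun ω j => X j ω) (fun ω j => Y j ω) μ μ where
  aemeasurable_fst := aemeasurable_pi_lambda _ hXm
  aemeasurable_snd := aemeasurable_pi_lambda _ hYm
  map_eq := by rw [hX.map_fun_eq_pi_map hXm, hY.map_fun_eq_pi_map hYm, funext hXY]

theorem abs_integral_abs_sum_sub_le_sqrt [IsProbabilityMeasure μ] {ι : Type*} [Fintype ι]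
    {X : ι → Ω → ℝ} (hX : iIndepFun X μ) (hXm : ∀ j, AEMeasurable (X j) μ) {ν : Measure ℝ}
    (hXν : ∀ j, μ.map (X j) = ν) {g : ℝ → ℝ} (hg : Measurable g) (hid : MemLp id 2 ν)
    (hg₂ : MemLp g 2 ν) (hmean : ∫ x, (x - g x) ∂ν = 0) (a : ι → ℝ) :
    |∫ ω, |∑ j, a j * X j ω| ∂μ - ∫ ω, |∑ j, a j * g (X j ω)| ∂μ|
      ≤ √((∑ j, a j ^ 2) * ∫ x, (x - g x) ^ 2 ∂ν) := by
  have hlaw : ∀ j {F : ℝ → ℝ}, MemLp F 2 ν → MemLp (fun ω => F (X j ω)) 2 μ := fun j F hF =>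
    (hXν j ▸ hF).comp_of_map (hXm j)
  have hlaw_int : ∀ j {F : ℝ → ℝ}, AEStronglyMeasurable F ν →
      ∫ ω, F (X j ω) ∂μ = ∫ x, F x ∂ν := fun j F hF => by
    rw [← hXν j] at hF ⊢; exact (integral_map (hXm j) hF).symm
  have hsum_int : ∀ {F : ℝ → ℝ}, MemLp F 2 ν → Integrable (fun ω => ∑ j, a j * F (X j ω)) μ :=
    fun hF => integrable_finsetSum _ fun j _ => ((hlaw j hF).integrable one_le_two).const_mul _
  have hD : MemLp (fun x => x - g x) 2 ν := hid.sub hg₂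
  have hvar := integral_sq_sum_mul_of_iIndepFun (hX.comp (fun _ x => x - g x)
      fun _ => measurable_id.sub hg) (fun j => hlaw j hD)
    (fun j => (hlaw_int j hD.aestronglyMeasurable).trans hmean) a
  simp only [Function.comp_apply] at hvar
  calc |∫ ω, |∑ j, a j * X j ω| ∂μ - ∫ ω, |∑ j, a j * g (X j ω)| ∂μ|
      ≤ ∫ ω, |∑ j, a j * X j ω - ∑ j, a j * g (X j ω)| ∂μ :=
        abs_integral_abs_sub_integral_abs_le (hsum_int hid) (hsum_int hg₂)
    _ = ∫ ω, |∑ j, a j * (X j ω - g (X j ω))| ∂μ := by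
        simp only [mul_sub, Finset.sum_sub_distrib]
    _ ≤ √(∫ ω, (∑ j, a j * (X j ω - g (X j ω))) ^ 2 ∂μ) :=
        integral_abs_le_sqrt_integral_sq (memLp_finsetSum _ fun j _ => (hlaw j hD).const_mul _)
    _ = √((∑ j, a j ^ 2) * ∫ x, (x - g x) ^ 2 ∂ν) := by
        rw [hvar, Finset.sum_mul]
        congr 2 with j
        rw [hlaw_int j (F := fun x => (x - g x) ^ 2) (hD.aestronglyMeasurable.pow 2)]

end Probability

noncomputable def symPowExpPDF (q x : ℝ) : ℝ :=
  (2 * (q - 1) * Gamma (1 + 1 / q))⁻¹ * |x| ^ ((2 - q) / (q - 1)) *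
    exp (-(|x| ^ (q / (q - 1))))

noncomputable def symPowExp (q : ℝ) : Measure ℝ :=
  volume.withDensity fun x => ENNReal.ofReal (symPowExpPDF q x)

section symPowExp

variable {q : ℝ}

theorem measurable_symPowExpPDF (q : ℝ) : Measurable (symPowExpPDF q) := by
  unfold symPowExpPDF; fun_prop

theorem symPowExpPDF_nonneg (hq : 1 < q) (x : ℝ) : 0 ≤ symPowExpPDF q x := by
  have : 0 < Gamma (1 + 1 / q) := Gamma_pos_of_pos (by positivity)
  have : 0 < q - 1 := by linarith
  unfold symPowExpPDF; positivity

theorem symPowExpPDF_mul_rpow {x : ℝ} (hx : 0 < x) (p : ℝ) :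
    symPowExpPDF q x * x ^ p = (2 * (q - 1) * Gamma (1 + 1 / q))⁻¹ *
      (x ^ (p + (2 - q) / (q - 1)) * exp (-x ^ (q / (q - 1)))) := by
  rw [symPowExpPDF, abs_of_pos hx, rpow_add hx]; ring

theorem integrable_symPowExpPDF_mul_abs_rpow (hq : 1 < q) {p : ℝ} (hp : -1 < p * (q - 1)) :
    Integrable fun x => symPowExpPDF q x * |x| ^ p := by
  have hq₀ : 0 < q - 1 := by linarith
  have hα : -1 < p + (2 - q) / (q - 1) := by
    field_simp
    linarith
  have hβ : 0 < q / (q - 1) := div_pos (by linarith) hq₀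
  refine IntegrableOn.integrable_comp_abs (g := fun x => symPowExpPDF q x * x ^ p) ?_ |>.congr ?_
  · exact IntegrableOn.congr_fun ((integrableOn_rpow_mul_exp_neg_rpow hα hβ).const_mul _)
      (fun x hx => (symPowExpPDF_mul_rpow hx p).symm) measurableSet_Ioi
  · exact ae_of_all _ fun x => by simp [symPowExpPDF]

theorem integral_symPowExpPDF_mul_abs_rpow (hq : 1 < q) {p : ℝ} (hp : -1 < p * (q - 1)) :
    ∫ x, symPowExpPDF q x * |x| ^ p = Gamma ((p * (q - 1) + 1) / q) / Gamma (1 / q) := by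
  have hq₀ : 0 < q - 1 := by linarith
  have hα : -1 < p + (2 - q) / (q - 1) := by
    field_simp
    linarith
  have hβ : 0 < q / (q - 1) := div_pos (by linarith) hq₀
  have hΓ : Gamma (1 + 1 / q) = 1 / q * Gamma (1 / q) := by
    rw [add_comm, Gamma_add_one (by positivity)]
  have hΓpos : 0 < Gamma (1 / q) := Gamma_pos_of_pos (by positivity)
  calc ∫ x, symPowExpPDF q x * |x| ^ p
      = ∫ x, (fun x => symPowExpPDF q x * x ^ p) |x| := by simp [symPowExpPDF]
    _ = 2 * ∫ x in Ioi 0, symPowExpPDF q x * x ^ p :=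
        integral_comp_abs (f := fun x => symPowExpPDF q x * x ^ p)
    _ = 2 * ∫ x in Ioi 0, (2 * (q - 1) * Gamma (1 + 1 / q))⁻¹ *
          (x ^ (p + (2 - q) / (q - 1)) * exp (-x ^ (q / (q - 1)))) := by
        congr 1
        exact setIntegral_congr_fun measurableSet_Ioi fun x hx => symPowExpPDF_mul_rpow hx p
    _ = Gamma ((p * (q - 1) + 1) / q) / Gamma (1 / q) := by
        rw [integral_const_mul, integral_rpow_mul_exp_neg_rpow hβ hα, hΓ,
          show (p + (2 - q) / (q - 1) + 1) / (q / (q - 1)) = (p * (q - 1) + 1) / q by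
            field_simp; ring]
        field_simp

theorem isProbabilityMeasure_symPowExp (hq : 1 < q) : IsProbabilityMeasure (symPowExp q) := by
  have hint := integrable_symPowExpPDF_mul_abs_rpow hq (p := 0) (by simp)
  have h1 := integral_symPowExpPDF_mul_abs_rpow hq (p := 0) (by simp)
  simp only [rpow_zero, mul_one, zero_mul, zero_add] at hint h1
  rw [div_self (Gamma_pos_of_pos (by positivity)).ne'] at h1
  refine ⟨?_⟩
  rw [symPowExp, withDensity_apply _ MeasurableSet.univ, Measure.restrict_univ,
    ← ofReal_integral_eq_lintegral_ofReal hint (ae_of_all _ (symPowExpPDF_nonneg hq)), h1,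
    ENNReal.ofReal_one]

theorem integral_symPowExp (hq : 1 < q) (f : ℝ → ℝ) :
    ∫ x, f x ∂symPowExp q = ∫ x, symPowExpPDF q x * f x := by
  rw [symPowExp, integral_withDensity_eq_integral_toReal_smul
    (measurable_symPowExpPDF q).ennreal_ofReal (ae_of_all _ fun _ => ENNReal.ofReal_lt_top)]
  simp [ENNReal.toReal_ofReal (symPowExpPDF_nonneg hq _)]

theorem integrable_symPowExp_iff (hq : 1 < q) {f : ℝ → ℝ} :
    Integrable f (symPowExp q) ↔ Integrable fun x => symPowExpPDF q x * f x := by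
  rw [symPowExp, integrable_withDensity_iff_integrable_smul'
    (measurable_symPowExpPDF q).ennreal_ofReal (ae_of_all _ fun _ => ENNReal.ofReal_lt_top)]
  simp [ENNReal.toReal_ofReal (symPowExpPDF_nonneg hq _)]

theorem integrable_abs_rpow_symPowExp (hq : 1 < q) {p : ℝ} (hp : -1 < p * (q - 1)) :
    Integrable (fun x => |x| ^ p) (symPowExp q) :=
  (integrable_symPowExp_iff hq).mpr (integrable_symPowExpPDF_mul_abs_rpow hq hp)

theorem integral_abs_rpow_symPowExp (hq : 1 < q) {p : ℝ} (hp : -1 < p * (q - 1)) :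
    ∫ x, |x| ^ p ∂symPowExp q = Gamma ((p * (q - 1) + 1) / q) / Gamma (1 / q) := by
  rw [integral_symPowExp hq, integral_symPowExpPDF_mul_abs_rpow hq hp]

instance isNegInvariant_symPowExp : (symPowExp q).IsNegInvariant :=
  Measure.isNegInvariant_withDensity _ fun x => by simp [symPowExpPDF]

theorem symPowExp_singleton (x : ℝ) : symPowExp q {x} = 0 :=
  withDensity_absolutelyContinuous _ _ (Real.volume_singleton)

theorem memLp_id_symPowExp (hq : 1 < q) : MemLp id 2 (symPowExp q) := by
  refine (memLp_two_iff_integrable_sq aestronglyMeasurable_id).mpr ?_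
  simpa [rpow_two, sq_abs] using integrable_abs_rpow_symPowExp hq (p := 2) (by nlinarith)

theorem integral_sub_pmSign_sq_symPowExp (hq : 1 < q) :
    ∫ x, (x - pmSign x) ^ 2 ∂symPowExp q
      = (Gamma (2 - 1 / q) - 2 + Gamma (1 / q)) / Gamma (1 / q) := by
  have := isProbabilityMeasure_symPowExp hq
  have hsq := integrable_abs_rpow_symPowExp hq (p := 2) (by nlinarith)
  have habs := integrable_abs_rpow_symPowExp hq (p := 1) (by linarith)
  have hsq_eq := integral_abs_rpow_symPowExp hq (p := 2) (by nlinarith)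
  have habs_eq := integral_abs_rpow_symPowExp hq (p := 1) (by linarith)
  simp only [rpow_two, sq_abs, rpow_one] at hsq habs hsq_eq habs_eq
  rw [show (2 * (q - 1) + 1) / q = 2 - 1 / q by field_simp; ring] at hsq_eq
  rw [show (1 * (q - 1) + 1) / q = 1 by field_simp; ring, Gamma_one] at habs_eq
  have hΓ : Gamma (1 / q) ≠ 0 := (Gamma_pos_of_pos (by positivity)).ne'
  simp_rw [sub_pmSign_sq]
  rw [integral_add (hsq.sub' (habs.const_mul 2)) (integrable_const 1), integral_sub hsq
    (habs.const_mul 2), integral_const_mul, hsq_eq, habs_eq, integral_const, probReal_univ]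
  field_simp
  ring

theorem integral_sub_pmSign_sq_symPowExp_le (hq₁ : 1 < q) (hq₂ : q ≤ 2) :
    ∫ x, (x - pmSign x) ^ 2 ∂symPowExp q ≤ 4 * (1 - 1 / q) ^ 2 := by
  rw [integral_sub_pmSign_sq_symPowExp hq₁]
  set s := 1 - 1 / q with hs_def
  have hq_inv : 1 / 2 ≤ 1 / q ∧ 1 / q < 1 := ⟨by gcongr, by rw [div_lt_one] <;> linarith⟩
  have hs : |s| ≤ 1 / 2 := abs_le.mpr ⟨by linarith, by linarith⟩
  have hΓ : 1 ≤ Gamma (1 - s) := by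
    have := Gamma_strictAntiOn_Ioc.antitoneOn (a := 1 - s) (b := 1) ⟨by linarith, by linarith⟩
      ⟨one_pos, le_rfl⟩ (by linarith)
    rwa [Gamma_one] at this
  have hsum := Gamma_one_add_add_Gamma_one_sub_le hs
  rw [show 2 - 1 / q = 1 + s by ring, show 1 / q = 1 - s by ring,
    div_le_iff₀ (by linarith)]
  nlinarith [sq_nonneg s]

end symPowExp

theorem equicontinuity_projections {Ω : Type*} [MeasurableSpace Ω] (μ : Measure Ω)
    [IsProbabilityMeasure μ] (n : ℕ) (q : ℝ) (hq₁ : 1 < q) (hq₂ : q < 2)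
    (X ε : Fin n → Ω → ℝ)
    (hXindep : iIndepFun X μ)
    (hXdist : ∀ j, Measure.map (X j) μ =
      volume.withDensity (fun x => ENNReal.ofReal
        ((2 * (q - 1) * Real.Gamma (1 + 1 / q))⁻¹ * |x| ^ ((2 - q) / (q - 1)) *
          Real.exp (-(|x| ^ (q / (q - 1)))))))
    (hεindep : iIndepFun ε μ)
    (hεdist : ∀ j, Measure.map (ε j) μ =
      (2⁻¹ : ENNReal) • (Measure.dirac (1 : ℝ) + Measure.dirac (-1 : ℝ)))
    (a : Fin n → ℝ) (ha : ∑ j, a j ^ 2 = 1) :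
    |(∫ ω, |∑ j, a j * X j ω| ∂μ) - ∫ ω, |∑ j, a j * ε j ω| ∂μ| ≤ 3 * (1 - 1 / q) := by
  have := isProbabilityMeasure_symPowExp hq₁
  have hXν : ∀ j, μ.map (X j) = symPowExp q := hXdist
  have hερ : ∀ j, μ.map (ε j) = rademacher := hεdist
  have hXm j : AEMeasurable (X j) μ := aemeasurable_of_map_neZero (by rw [hXν j]; infer_instance)
  have hεm j : AEMeasurable (ε j) μ := aemeasurable_of_map_neZero (by rw [hερ j]; infer_instance)
  have hsignm j : AEMeasurable (pmSign ∘ X j) μ := measurable_pmSign.comp_aemeasurable (hXm j)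
  have hsign j : μ.map (pmSign ∘ X j) = rademacher := by
    rw [← AEMeasurable.map_map_of_aemeasurable measurable_pmSign.aemeasurable (hXm j), hXν j,
      map_pmSign_eq_rademacher _ (symPowExp_singleton 0)]
  have hε_eq : ∫ ω, |∑ j, a j * ε j ω| ∂μ = ∫ ω, |∑ j, a j * pmSign (X j ω)| ∂μ :=
    ((hεindep.identDistrib_pi (hXindep.comp _ fun _ => measurable_pmSign) hεm hsignm
      fun j => by rw [hερ j, hsign j]).comp (u := fun y : Fin n → ℝ => |∑ j, a j * y j|)
        (by fun_prop)).integral_eq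
  have hq₀ : 0 ≤ 1 - 1 / q := by rw [sub_nonneg, div_le_one] <;> linarith
  calc _ ≤ √((∑ j, a j ^ 2) * ∫ x, (x - pmSign x) ^ 2 ∂symPowExp q) := by
        rw [hε_eq]
        exact abs_integral_abs_sum_sub_le_sqrt hXindep hXm hXν measurable_pmSign
          (memLp_id_symPowExp hq₁) (memLp_pmSign 2 _) (integral_sub_pmSign_eq_zero _
            (symPowExp_singleton 0)) a
    _ ≤ √((3 * (1 - 1 / q)) ^ 2) := by
        rw [ha, one_mul]
        gcongr
        nlinarith [integral_sub_pmSign_sq_symPowExp_le hq₁ hq₂.le]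
    _ = 3 * (1 - 1 / q) := sqrt_sq (by linarith)
end

section
/- Let p > 0, α ∈ (0, 1/p], and let R₁, R₂ be i.i.d. positive random variables whose common density g satisfies g(x) ≥ (p/4)·𝟙_{[1-1/(2p),1]}(x). Then P(R₁ ≤ 1 and |R₁ - R₂| < α) ≥ (p²α/16)·(1/p - α) if α ≤ 1/(2p), and P(R₁ ≤ 1 and |R₁ - R₂| < α) ≥ 1/64 if α > 1/(2p). In particular, when α ≤ 1/(2p) the probability is at least pα/32. -/
/-! The law `ν` of `R₁` and `R₂` dominates `c • volume` on `I = [1 - L, 1]`, with `c = p / 4` and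
`L = 1 / (2p)`. By independence the probability is `(ν ⊗ ν)` of the strip, hence at least `c²` times
the area of `{(x, y) ∈ I² : |x - y| < β}` for any `β ≤ min α L`; that area is `β (2L - β)`, the
square minus two corner triangles of side `L - β`. Taking `β = α` or `β = L` gives the two cases. -/

open Real MeasureTheory ProbabilityTheory Set

theorem integral_min_const_of_le {β L : ℝ} (hβ : 0 ≤ β) (hβL : β ≤ L) :
    ∫ t in (0 : ℝ)..L, min t β = β * L - β ^ 2 / 2 := by
  have hcont : Continuous fun t : ℝ => min t β := by fun_prop
  have hlow : ∫ t in (0 : ℝ)..β, min t β = ∫ t in (0 : ℝ)..β, t :=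
    intervalIntegral.integral_congr fun t ht => by
      rw [uIcc_of_le hβ] at ht
      exact min_eq_left ht.2
  have hhigh : ∫ t in β..L, min t β = ∫ _ in β..L, β :=
    intervalIntegral.integral_congr fun t ht => by
      rw [uIcc_of_le hβL] at ht
      exact min_eq_right ht.1
  rw [← intervalIntegral.integral_add_adjacent_intervals (b := β) (hcont.intervalIntegrable _ _)
    (hcont.intervalIntegrable _ _), hlow, hhigh, integral_id, intervalIntegral.integral_const,
    smul_eq_mul]
  ring

theorem ofReal_le_volume_square_inter_strip {a b β : ℝ} (hβ : 0 ≤ β) (hβL : β ≤ b - a) :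
    ENNReal.ofReal (β * (2 * (b - a) - β)) ≤
      volume ({q : ℝ × ℝ | |q.1 - q.2| < β} ∩ Icc a b ×ˢ Icc a b) := by
  set lower : ℝ → ℝ := fun x => max a (x - β)
  set upper : ℝ → ℝ := fun x => min b (x + β)
  have hsub : regionBetween lower upper (Icc a b) ⊆
      {q : ℝ × ℝ | |q.1 - q.2| < β} ∩ Icc a b ×ˢ Icc a b := by
    rintro q ⟨hq, hya, hyb⟩
    obtain ⟨hay, hy⟩ := max_lt_iff.mp hya
    obtain ⟨hyb, hy'⟩ := lt_min_iff.mp hyb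
    refine ⟨?_, hq, hay.le, hyb.le⟩
    show |q.1 - q.2| < β
    rw [abs_sub_lt_iff]
    constructor <;> linarith
  have hwidth : ∀ x, upper x - lower x = min (b - x) β + min (x - a) β := fun x => by
    simp only [upper, lower]
    grind
  have harea : ∫ x in Icc a b, (upper - lower) x = β * (2 * (b - a) - β) := by
    rw [integral_Icc_eq_integral_Ioc, ← intervalIntegral.integral_of_le (by linarith)]
    simp only [Pi.sub_apply, hwidth]
    rw [intervalIntegral.integral_add
      (Continuous.intervalIntegrable (by fun_prop) _ _)
      (Continuous.intervalIntegrable (by fun_prop) _ _),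
      intervalIntegral.integral_comp_sub_left (fun t => min t β),
      intervalIntegral.integral_comp_sub_right (fun t => min t β), sub_self, sub_self,
      integral_min_const_of_le hβ hβL]
    ring
  calc ENNReal.ofReal (β * (2 * (b - a) - β))
      = volume (regionBetween lower upper (Icc a b)) := by
        rw [Measure.volume_eq_prod, volume_regionBetween_eq_integral
          (Continuous.integrableOn_Icc (by fun_prop)) (Continuous.integrableOn_Icc (by fun_prop))
          measurableSet_Icc (fun x hx => le_min (max_le (by linarith) (by linarith [hx.2]))
            (max_le (by linarith [hx.1]) (by linarith))), harea]
    _ ≤ _ := measure_mono hsub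

theorem smul_restrict_le_withDensity_ofReal {X : Type*} [MeasurableSpace X] (μ : Measure X)
    {s : Set X} (hs : MeasurableSet s) {c : ℝ} {g : X → ℝ}
    (hg : ∀ x, s.indicator (fun _ => c) x ≤ g x) :
    ENNReal.ofReal c • μ.restrict s ≤ μ.withDensity (fun x => ENNReal.ofReal (g x)) := by
  rw [← withDensity_const, ← withDensity_indicator hs]
  refine withDensity_mono (Filter.Eventually.of_forall fun x => ?_)
  by_cases hx : x ∈ s
  · simpa [hx] using ENNReal.ofReal_le_ofReal (hg x)
  · simp [hx]

theorem ofReal_le_prod_strip {ν : Measure ℝ} [SFinite ν] {a b c α β : ℝ} (hc : 0 ≤ c)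
    (hν : ENNReal.ofReal c • volume.restrict (Icc a b) ≤ ν) (hβ : 0 ≤ β) (hβL : β ≤ b - a)
    (hβα : β ≤ α) :
    ENNReal.ofReal (c ^ 2 * (β * (2 * (b - a) - β))) ≤
      ν.prod ν {q : ℝ × ℝ | q.1 ≤ b ∧ |q.1 - q.2| < α} := by
  set m := ENNReal.ofReal c • volume.restrict (Icc a b)
  have hsub : {q : ℝ × ℝ | |q.1 - q.2| < β} ∩ Icc a b ×ˢ Icc a b ⊆
      {q : ℝ × ℝ | q.1 ≤ b ∧ |q.1 - q.2| < α} ∩ Icc a b ×ˢ Icc a b :=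
    fun q ⟨hq, hI⟩ => ⟨⟨hI.1.2, lt_of_lt_of_le hq hβα⟩, hI⟩
  calc ENNReal.ofReal (c ^ 2 * (β * (2 * (b - a) - β)))
      = ENNReal.ofReal c * ENNReal.ofReal c * ENNReal.ofReal (β * (2 * (b - a) - β)) := by
        rw [← ENNReal.ofReal_mul hc, ← ENNReal.ofReal_mul (by positivity), sq]
    _ ≤ ENNReal.ofReal c * ENNReal.ofReal c *
          volume ({q : ℝ × ℝ | |q.1 - q.2| < β} ∩ Icc a b ×ˢ Icc a b) :=
        mul_le_mul_right (ofReal_le_volume_square_inter_strip hβ hβL) _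
    _ ≤ ENNReal.ofReal c * ENNReal.ofReal c *
          volume ({q : ℝ × ℝ | q.1 ≤ b ∧ |q.1 - q.2| < α} ∩ Icc a b ×ˢ Icc a b) :=
        mul_le_mul_right (measure_mono hsub) _
    _ ≤ m.prod m {q : ℝ × ℝ | q.1 ≤ b ∧ |q.1 - q.2| < α} := by
        simp only [m, Measure.prod_smul_left, Measure.prod_smul_right, Measure.prod_restrict,
          Measure.smul_apply, smul_eq_mul, ← Measure.volume_eq_prod]
        rw [← mul_assoc]
        exact mul_le_mul_right (Measure.le_restrict_apply _ _) _
    _ ≤ ν.prod ν {q : ℝ × ℝ | q.1 ≤ b ∧ |q.1 - q.2| < α} := Measure.prod_mono hν hν _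

theorem ProbabilityTheory.IndepFun.measure_preimage_eq_map_prod_map {Ω β γ : Type*}
    [MeasurableSpace Ω] [MeasurableSpace β] [MeasurableSpace γ] {μ : Measure Ω} [IsFiniteMeasure μ]
    {X : Ω → β} {Y : Ω → γ} (h : IndepFun X Y μ) (hX : AEMeasurable X μ) (hY : AEMeasurable Y μ)
    {S : Set (β × γ)} (hS : MeasurableSet S) :
    μ ((fun ω => (X ω, Y ω)) ⁻¹' S) = (μ.map X).prod (μ.map Y) S := by
  rw [← (indepFun_iff_map_prod_eq_prod_map_map hX hY).mp h,
    Measure.map_apply_of_aemeasurable (hX.prodMk hY) hS]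

theorem probability_strip_bound_general {Ω : Type*} [MeasurableSpace Ω] (μ : Measure Ω)
    [IsProbabilityMeasure μ] (p α : ℝ) (hp : 0 < p) (hα : α ∈ Set.Ioc 0 (1 / p))
    (g : ℝ → ℝ) (R₁ R₂ : Ω → ℝ)
    (hindep : IndepFun R₁ R₂ μ)
    (hd₁ : Measure.map R₁ μ = volume.withDensity (fun x => ENNReal.ofReal (g x)))
    (hd₂ : Measure.map R₂ μ = volume.withDensity (fun x => ENNReal.ofReal (g x)))
    (hg : ∀ x, (Set.Icc (1 - 1 / (2 * p)) 1).indicator (fun _ => p / 4) x ≤ g x) :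
    (α ≤ 1 / (2 * p) →
      ENNReal.ofReal (p ^ 2 * α / 16 * (1 / p - α)) ≤
        μ {ω | R₁ ω ≤ 1 ∧ |R₁ ω - R₂ ω| < α} ∧
      ENNReal.ofReal (p * α / 32) ≤ μ {ω | R₁ ω ≤ 1 ∧ |R₁ ω - R₂ ω| < α}) ∧
    (1 / (2 * p) < α →
      ENNReal.ofReal (1 / 64) ≤ μ {ω | R₁ ω ≤ 1 ∧ |R₁ ω - R₂ ω| < α}) := by
  set ν := volume.withDensity (fun x => ENNReal.ofReal (g x))
  set L := 1 / (2 * p) with hL_def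
  have hL : 0 < L := by positivity
  have hν : ENNReal.ofReal (p / 4) • volume.restrict (Icc (1 - L) 1) ≤ ν :=
    smul_restrict_le_withDensity_ofReal volume measurableSet_Icc hg
  have hν0 : ν ≠ 0 :=
    Measure.measure_univ_pos.mp <| lt_of_lt_of_le (by simp [hp, hL]) (hν univ)
  have hS : MeasurableSet {q : ℝ × ℝ | q.1 ≤ 1 ∧ |q.1 - q.2| < α} := by measurability
  have hlaw : μ {ω | R₁ ω ≤ 1 ∧ |R₁ ω - R₂ ω| < α} =
      ν.prod ν {q : ℝ × ℝ | q.1 ≤ 1 ∧ |q.1 - q.2| < α} := by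
    have := hindep.measure_preimage_eq_map_prod_map (.of_map_ne_zero (hd₁ ▸ hν0))
      (.of_map_ne_zero (hd₂ ▸ hν0)) hS
    rwa [hd₁, hd₂] at this
  have hbound : ∀ β, 0 ≤ β → β ≤ L → β ≤ α →
      ENNReal.ofReal ((p / 4) ^ 2 * (β * (2 * L - β))) ≤ μ {ω | R₁ ω ≤ 1 ∧ |R₁ ω - R₂ ω| < α} :=
    fun β hβ hβL hβα => hlaw ▸ by
      simpa using ofReal_le_prod_strip (by positivity) hν hβ (by simpa using hβL) hβα
  have hpL : p * L = 1 / 2 := by rw [hL_def]; field_simp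
  have h2L : 2 * L = 1 / p := by rw [hL_def]; field_simp
  clear_value L
  refine ⟨fun hαL => ⟨?_, ?_⟩, fun hLα => ?_⟩
  · convert hbound α hα.1.le hαL le_rfl using 2
    rw [h2L]
    ring
  · refine le_trans (ENNReal.ofReal_le_ofReal ?_) (hbound α hα.1.le hαL le_rfl)
    have hgap : 0 ≤ (p / 4) ^ 2 * (α * (L - α)) :=
      mul_nonneg (sq_nonneg _) (mul_nonneg hα.1.le (sub_nonneg.mpr hαL))
    linear_combination hgap - (p * α / 16) * hpL
  · convert hbound L hL.le le_rfl hLα.le using 2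
    linear_combination (-(p * L + 1 / 2) / 16) * hpL

theorem probability_strip_bound {Ω : Type*} [MeasurableSpace Ω] (μ : Measure Ω)
    [IsProbabilityMeasure μ] (p α : ℝ) (hp : 0 < p) (hα : α ∈ Set.Ioc 0 (1 / p))
    (g : ℝ → ℝ) (R₁ R₂ : Ω → ℝ)
    (hpos₁ : ∀ ω, 0 < R₁ ω) (hpos₂ : ∀ ω, 0 < R₂ ω)
    (hindep : IndepFun R₁ R₂ μ)
    (hd₁ : Measure.map R₁ μ = volume.withDensity (fun x => ENNReal.ofReal (g x)))
    (hd₂ : Measure.map R₂ μ = volume.withDensity (fun x => ENNReal.ofReal (g x)))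
    (hg : ∀ x, (Set.Icc (1 - 1 / (2 * p)) 1).indicator (fun _ => p / 4) x ≤ g x) :
    (α ≤ 1 / (2 * p) →
      ENNReal.ofReal (p ^ 2 * α / 16 * (1 / p - α)) ≤
        μ {ω | R₁ ω ≤ 1 ∧ |R₁ ω - R₂ ω| < α} ∧
      ENNReal.ofReal (p * α / 32) ≤ μ {ω | R₁ ω ≤ 1 ∧ |R₁ ω - R₂ ω| < α}) ∧
    (1 / (2 * p) < α →
      ENNReal.ofReal (1 / 64) ≤ μ {ω | R₁ ω ≤ 1 ∧ |R₁ ω - R₂ ω| < α}) :=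
  probability_strip_bound_general μ p α hp hα g R₁ R₂ hindep hd₁ hd₂ hg
end

section
/- Let 0 < δ₀ < 2/3 and c₀ = (1/(2√2))·(√((4-δ₀)/5) - √δ₀) > 0. For every n and every unit vector a in ℝⁿ with a₁ ≥ ... ≥ a_n ≥ 0 and δ(a) = 2 - √2(a₁+a₂) ≤ δ₀, and i.i.d. Rademacher signs ε₁,...,ε_n, we have E|∑_{j=1}^n aⱼεⱼ| ≥ 1/√2 + c₀·√(δ(a)). -/
open Real MeasureTheory ProbabilityTheory
open scoped ENNReal

/-!
Conditioning on the first two signs, `(|T - b| + |T + b|) / 2 = max |b| |T|` with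
`b₁ = a₀ + a₁`, `b₂ = a₀ - a₁` and `T = ∑_{j ≥ 2} aⱼ εⱼ`, so by Jensen
`E |∑ aⱼ εⱼ| ≥ (b₁ + max |b₂| (E |T|)) / 2`, and Szarek's inequality gives `E |T| ≥ √t / √2` for
the tail mass `t = 1 - a₀² - a₁²`. With `δ = 2 - √2 b₁`, what remains is the two-variable
inequality `max (√2 |b₂|) √t ≥ √δ · √((4 - δ₀) / 5)`: when `b₂` is small the tail mass is large.

Szarek's inequality is proved on the Boolean cube: `|∑ aⱼ sⱼ|` is even, has second moment `‖a‖²`,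
and flipping the bit `i` moves it by at most `2 |aᵢ|`. Even functions have no Fourier modes of
degree one, so the Poincaré inequality holds for them with twice the usual constant, which bounds
the variance by `‖a‖² / 2`.
-/

namespace BooleanCube

variable {m : ℕ}

def spin (b : Bool) : ℝ := if b then 1 else -1

def flipBit (i : Fin m) (s : Fin m → Bool) : Fin m → Bool :=
  Function.update s i (!s i)

def discreteDeriv (i : Fin m) (F : (Fin m → Bool) → ℝ) (s : Fin m → Bool) : ℝ :=
  F s - F (flipBit i s)

def sliceSum (F : (Fin (m + 1) → Bool) → ℝ) (s : Fin m → Bool) : ℝ :=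
  F (Fin.cons true s) + F (Fin.cons false s)

def sliceDiff (F : (Fin (m + 1) → Bool) → ℝ) (s : Fin m → Bool) : ℝ :=
  F (Fin.cons true s) - F (Fin.cons false s)

@[simp] lemma spin_true : spin true = 1 := rfl

@[simp] lemma spin_false : spin false = -1 := rfl

lemma spin_not (b : Bool) : spin (!b) = -spin b := by cases b <;> simp

lemma abs_spin (b : Bool) : |spin b| = 1 := by cases b <;> simp

lemma sum_const_cube (c : ℝ) : ∑ _s : Fin m → Bool, c = 2 ^ m * c := by simp

lemma sum_cube_succ {M : Type*} [AddCommMonoid M] (F : (Fin (m + 1) → Bool) → M) :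
    ∑ s, F s = ∑ s : Fin m → Bool, (F (Fin.cons true s) + F (Fin.cons false s)) := by
  rw [← (Fin.consEquiv fun _ => Bool).sum_comp, Fintype.sum_prod_type, Fintype.sum_bool,
    Finset.sum_add_distrib]
  rfl

lemma not_cons (t : Bool) (s : Fin m → Bool) :
    (fun j => !(Fin.cons t s : Fin (m + 1) → Bool) j) = Fin.cons (!t) (fun j => !s j) := by
  funext j
  refine Fin.cases ?_ ?_ j <;> simp

lemma flipBit_cons_zero (t : Bool) (s : Fin m → Bool) :
    flipBit 0 (Fin.cons t s : Fin (m + 1) → Bool) = Fin.cons (!t) s := by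
  simp [flipBit, Fin.update_cons_zero]

lemma flipBit_cons_succ (i : Fin m) (t : Bool) (s : Fin m → Bool) :
    flipBit i.succ (Fin.cons t s : Fin (m + 1) → Bool) = Fin.cons t (flipBit i s) := by
  simp [flipBit, ← Fin.cons_update]

lemma sum_eq_sum_sliceSum (F : (Fin (m + 1) → Bool) → ℝ) : ∑ s, F s = ∑ s, sliceSum F s :=
  sum_cube_succ F

lemma sum_sq_eq_sliceSum_sliceDiff (F : (Fin (m + 1) → Bool) → ℝ) :
    ∑ s, F s ^ 2 = (∑ s, sliceSum F s ^ 2 + ∑ s, sliceDiff F s ^ 2) / 2 := by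
  rw [sum_cube_succ, ← Finset.sum_add_distrib, Finset.sum_div]
  congr! 1 with s
  simp only [sliceSum, sliceDiff]
  ring

lemma sum_sq_discreteDeriv_eq_sliceSum_sliceDiff (F : (Fin (m + 1) → Bool) → ℝ) :
    ∑ i, ∑ s, discreteDeriv i F s ^ 2 = 2 * ∑ s, sliceDiff F s ^ 2 +
      (∑ i, ∑ s, discreteDeriv i (sliceSum F) s ^ 2 +
        ∑ i, ∑ s, discreteDeriv i (sliceDiff F) s ^ 2) / 2 := by
  rw [Fin.sum_univ_succ, ← Finset.sum_add_distrib, Finset.sum_div, sum_cube_succ,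
    Finset.mul_sum]
  congr 1
  · congr! 1 with s
    simp only [discreteDeriv, flipBit_cons_zero, sliceDiff, Bool.not_true, Bool.not_false]
    ring
  · congr! 1 with i
    rw [sum_cube_succ, ← Finset.sum_add_distrib, Finset.sum_div]
    congr! 1 with s
    simp only [discreteDeriv, flipBit_cons_succ, sliceSum, sliceDiff]
    ring

variable {κ : ℝ}

lemma sliceSum_not {F : (Fin (m + 1) → Bool) → ℝ} (hF : ∀ s, F (fun j => !s j) = κ * F s)
    (s : Fin m → Bool) : sliceSum F (fun j => !s j) = κ * sliceSum F s := by
  have h₀ := hF (Fin.cons false s)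
  have h₁ := hF (Fin.cons true s)
  simp only [not_cons, Bool.not_true, Bool.not_false] at h₀ h₁
  simp only [sliceSum, h₀, h₁]
  ring

lemma sliceDiff_not {F : (Fin (m + 1) → Bool) → ℝ} (hF : ∀ s, F (fun j => !s j) = κ * F s)
    (s : Fin m → Bool) : sliceDiff F (fun j => !s j) = -κ * sliceDiff F s := by
  have h₀ := hF (Fin.cons false s)
  have h₁ := hF (Fin.cons true s)
  simp only [not_cons, Bool.not_true, Bool.not_false] at h₀ h₁
  simp only [sliceDiff, h₀, h₁]
  ring

lemma four_mul_sum_sq_le_of_odd (F : (Fin m → Bool) → ℝ)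
    (hF : ∀ s, F (fun j => !s j) = -F s) :
    4 * ∑ s, F s ^ 2 ≤ ∑ i, ∑ s, discreteDeriv i F s ^ 2 := by
  induction m with
  | zero =>
    have hF₀ (s : Fin 0 → Bool) : F s = 0 := by
      have := hF s
      rw [Subsingleton.elim (fun j => !s j) s] at this
      linarith
    simp [hF₀]
  | succ m ih =>
    have hF' : ∀ s, F (fun j => !s j) = -1 * F s := fun s => by rw [hF]; ring
    have hG := ih (sliceSum F) fun s => by rw [sliceSum_not hF']; ring
    have hH : 0 ≤ ∑ i, ∑ s, discreteDeriv i (sliceDiff F) s ^ 2 := by positivity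
    rw [sum_sq_eq_sliceSum_sliceDiff, sum_sq_discreteDeriv_eq_sliceSum_sliceDiff]
    linarith

lemma variance_le_of_even (F : (Fin m → Bool) → ℝ) (hF : ∀ s, F (fun j => !s j) = F s) :
    8 * (2 ^ m * ∑ s, F s ^ 2 - (∑ s, F s) ^ 2) ≤
      2 ^ m * ∑ i, ∑ s, discreteDeriv i F s ^ 2 := by
  induction m with
  | zero => simp
  | succ m ih =>
    have hF' : ∀ s, F (fun j => !s j) = 1 * F s := by simpa using hF
    have hG := ih (sliceSum F) fun s => by rw [sliceSum_not hF']; ring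
    have hH := four_mul_sum_sq_le_of_odd (sliceDiff F) fun s => by
      rw [sliceDiff_not hF']; ring
    rw [sum_sq_eq_sliceSum_sliceDiff, sum_sq_discreteDeriv_eq_sliceSum_sliceDiff,
      sum_eq_sum_sliceSum, pow_succ]
    nlinarith [pow_pos (two_pos (α := ℝ)) m]

def rademacherSum (a : Fin m → ℝ) (s : Fin m → Bool) : ℝ := ∑ j, a j * spin (s j)

lemma rademacherSum_cons (a : Fin (m + 1) → ℝ) (t : Bool) (s : Fin m → Bool) :
    rademacherSum a (Fin.cons t s) = a 0 * spin t + rademacherSum (Fin.tail a) s := by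
  simp [rademacherSum, Fin.sum_univ_succ, Fin.tail]

lemma rademacherSum_not (a : Fin m → ℝ) (s : Fin m → Bool) :
    rademacherSum a (fun j => !s j) = -rademacherSum a s := by
  simp [rademacherSum, spin_not]

lemma rademacherSum_flipBit (a : Fin m → ℝ) (i : Fin m) (s : Fin m → Bool) :
    rademacherSum a (flipBit i s) = rademacherSum a s - 2 * a i * spin (s i) := by
  have h (j : Fin m) : a j * spin (flipBit i s j) =
      a j * spin (s j) - if j = i then 2 * a i * spin (s i) else 0 := by
    by_cases hj : j = i
    · subst hj; simp [flipBit, spin_not]; ring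
    · simp [flipBit, hj]
  simp [rademacherSum, h, Finset.sum_sub_distrib]

lemma sum_rademacherSum_sq (a : Fin m → ℝ) :
    ∑ s, rademacherSum a s ^ 2 = 2 ^ m * ∑ j, a j ^ 2 := by
  induction m with
  | zero => simp [rademacherSum]
  | succ m ih =>
    rw [sum_cube_succ]
    simp only [rademacherSum_cons, spin_true, spin_false]
    have h (x : ℝ) : (a 0 * 1 + x) ^ 2 + (a 0 * -1 + x) ^ 2 = 2 * x ^ 2 + 2 * a 0 ^ 2 := by ring
    simp only [h, Finset.sum_add_distrib, ← Finset.mul_sum, ih, sum_const_cube,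
      Fin.sum_univ_succ (fun j => a j ^ 2), Fin.tail]
    ring

lemma abs_discreteDeriv_abs_rademacherSum_le (a : Fin m → ℝ) (i : Fin m) (s : Fin m → Bool) :
    |discreteDeriv i (fun s => |rademacherSum a s|) s| ≤ 2 * |a i| := by
  calc |discreteDeriv i (fun s => |rademacherSum a s|) s|
      ≤ |rademacherSum a s - rademacherSum a (flipBit i s)| := abs_abs_sub_abs_le_abs_sub _ _
    _ = 2 * |a i| := by simp [rademacherSum_flipBit, abs_mul, abs_spin]

theorem szarek (a : Fin m → ℝ) :
    2 ^ m * √(∑ j, a j ^ 2) ≤ √2 * ∑ s, |rademacherSum a s| := by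
  set F : (Fin m → Bool) → ℝ := fun s => |rademacherSum a s|
  have hvar := variance_le_of_even F fun s => by simp [F, rademacherSum_not]
  have hsq : ∑ s, F s ^ 2 = 2 ^ m * ∑ j, a j ^ 2 := by simp [F, sum_rademacherSum_sq]
  have hdiff : ∑ i, ∑ s, discreteDeriv i F s ^ 2 ≤ 2 ^ m * (4 * ∑ j, a j ^ 2) := by
    calc ∑ i, ∑ s, discreteDeriv i F s ^ 2
        ≤ ∑ i, ∑ _s : Fin m → Bool, (2 * |a i|) ^ 2 := by
          refine Finset.sum_le_sum fun i _ => Finset.sum_le_sum fun s _ => ?_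
          have h := abs_le.1 (abs_discreteDeriv_abs_rademacherSum_le a i s)
          exact sq_le_sq' h.1 h.2
      _ = 2 ^ m * (4 * ∑ j, a j ^ 2) := by
          simp only [sum_const_cube, mul_pow, sq_abs, Finset.mul_sum]; norm_num
  have hpos : (0 : ℝ) < 2 ^ m := by positivity
  rw [hsq] at hvar
  have key : (2 ^ m * √(∑ j, a j ^ 2)) ^ 2 ≤ (√2 * ∑ s, F s) ^ 2 := by
    rw [mul_pow, mul_pow, sq_sqrt (by positivity), sq_sqrt zero_le_two]
    nlinarith [mul_le_mul_of_nonneg_left hdiff hpos.le]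
  exact (pow_le_pow_iff_left₀ (by positivity) (by positivity) two_ne_zero).1 key

lemma two_mul_max_abs_le (x b : ℝ) : 2 * max |b| |x| ≤ |x - b| + |x + b| := by
  rw [mul_max_of_nonneg _ _ zero_le_two]
  refine max_le ?_ ?_
  · have := abs_sub (x + b) (x - b)
    rw [show x + b - (x - b) = 2 * b by ring, abs_mul, abs_two] at this
    linarith
  · have := abs_add_le (x - b) (x + b)
    rw [show x - b + (x + b) = 2 * x by ring, abs_mul, abs_two] at this
    linarith

lemma two_mul_add_max_abs_le (p q x : ℝ) :
    2 * (max |p + q| |x| + max |p - q| |x|) ≤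
      |p + (q + x)| + |-p + (q + x)| + (|p + (-q + x)| + |-p + (-q + x)|) := by
  have h₁ := two_mul_max_abs_le x (p + q)
  have h₂ := two_mul_max_abs_le x (p - q)
  rw [show x - (p + q) = -p + (-q + x) by ring, show x + (p + q) = p + (q + x) by ring] at h₁
  rw [show x - (p - q) = -p + (q + x) by ring, show x + (p - q) = p + (-q + x) by ring] at h₂
  linarith

lemma sum_abs_rademacherSum_ge (a : Fin (m + 2) → ℝ) :
    2 * (2 ^ m * |a 0 + a 1| +
      max (2 ^ m * |a 0 - a 1|) (∑ s, |rademacherSum (Fin.tail (Fin.tail a)) s|)) ≤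
      ∑ s, |rademacherSum a s| := by
  set T := rademacherSum (Fin.tail (Fin.tail a))
  rw [sum_cube_succ, sum_cube_succ]
  simp only [rademacherSum_cons, spin_true, spin_false, mul_one, mul_neg, Fin.tail_def,
    Fin.succ_zero_eq_one]
  calc 2 * (2 ^ m * |a 0 + a 1| + max (2 ^ m * |a 0 - a 1|) (∑ s, |T s|))
      ≤ 2 * ∑ s, (max |a 0 + a 1| |T s| + max |a 0 - a 1| |T s|) := by
        rw [Finset.sum_add_distrib, ← sum_const_cube, ← sum_const_cube]
        gcongr 2 * (?_ + ?_)
        · exact Finset.sum_le_sum fun s _ => le_max_left _ _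
        · exact max_le (Finset.sum_le_sum fun s _ => le_max_left _ _)
            (Finset.sum_le_sum fun s _ => le_max_right _ _)
    _ ≤ _ := by
        rw [Finset.mul_sum]
        exact Finset.sum_le_sum fun s _ => two_mul_add_max_abs_le _ _ _

lemma average_abs_rademacherSum_ge (a : Fin (m + 2) → ℝ) :
    (|a 0 + a 1| + max |a 0 - a 1| (√(∑ j, Fin.tail (Fin.tail a) j ^ 2) / √2)) / 2 ≤
      (∑ s, |rademacherSum a s|) / 2 ^ (m + 2) := by
  have hpos : (0 : ℝ) < 2 ^ m := by positivity
  have htail : 2 ^ m * max |a 0 - a 1| (√(∑ j, Fin.tail (Fin.tail a) j ^ 2) / √2) ≤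
      max (2 ^ m * |a 0 - a 1|) (∑ s, |rademacherSum (Fin.tail (Fin.tail a)) s|) := by
    rw [mul_max_of_nonneg _ _ hpos.le, mul_div_assoc']
    gcongr
    rw [div_le_iff₀ (by positivity), mul_comm _ √2]
    exact szarek _
  rw [div_le_div_iff₀ two_pos (by positivity), pow_add]
  nlinarith [sum_abs_rademacherSum_ge a]

end BooleanCube

namespace ProbabilityTheory

open BooleanCube

noncomputable def rademacher : Measure ℝ :=
  (2⁻¹ : ℝ≥0∞) • (Measure.dirac 1 + Measure.dirac (-1))

instance : IsProbabilityMeasure rademacher :=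
  ⟨by simp [rademacher, ← two_mul, ENNReal.mul_inv_cancel]⟩

lemma rademacher_apply {B : Set ℝ} (hB : MeasurableSet B) :
    rademacher B = 2⁻¹ * ∑ b : Bool, B.indicator 1 (spin b) := by
  simp [rademacher, Measure.dirac_apply' _ hB, mul_add]

lemma pi_rademacher (m : ℕ) :
    Measure.pi (fun _ : Fin m => rademacher) =
      (2 ^ m : ℝ≥0∞)⁻¹ • ∑ s : Fin m → Bool, Measure.dirac (fun j => spin (s j)) := by
  refine Measure.pi_eq fun B hB => ?_
  simp only [Measure.smul_apply, Measure.finsetSum_apply, smul_eq_mul,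
    Measure.dirac_apply' _ (MeasurableSet.univ_pi hB), rademacher_apply (hB _),
    Finset.prod_mul_distrib, Fintype.prod_sum]
  rw [Finset.prod_const, Finset.card_univ, Fintype.card_fin, ENNReal.inv_pow]
  congr! 2 with s
  classical
  simp only [Set.indicator_apply, Set.mem_univ_pi, Pi.one_apply, Fintype.prod_boole]
  congr

theorem integral_comp_eq_cube_average {Ω : Type*} [MeasurableSpace Ω] {μ : Measure Ω} {m : ℕ}
    {ε : Fin m → Ω → ℝ} (hind : iIndepFun ε μ) (hlaw : ∀ j, μ.map (ε j) = rademacher)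
    {g : (Fin m → ℝ) → ℝ} (hg : Measurable g) :
    ∫ ω, g (fun j => ε j ω) ∂μ = (∑ s : Fin m → Bool, g (fun j => spin (s j))) / 2 ^ m := by
  have hmeas (j : Fin m) : AEMeasurable (ε j) μ :=
    .of_map_ne_zero (by rw [hlaw j]; exact IsProbabilityMeasure.ne_zero _)
  have hjoint : μ.map (fun ω j => ε j ω) = Measure.pi fun _ => rademacher := by
    rw [hind.map_fun_eq_pi_map hmeas]
    simp only [hlaw]
  rw [← integral_map (aemeasurable_pi_lambda _ hmeas) hg.aestronglyMeasurable, hjoint,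
    pi_rademacher, integral_smul_measure,
    integral_finsetSum_measure fun s _ => integrable_dirac enorm_lt_top]
  simp [integral_dirac, div_eq_inv_mul]

end ProbabilityTheory

section TwoVariable

variable {b₁ b₂ t δ₀ : ℝ}

lemma sqrt_deficit_mul_le_max (ht : b₁ ^ 2 + b₂ ^ 2 + 2 * t = 2) (ht₀ : 0 ≤ t)
    (hδ : 2 - √2 * b₁ ≤ δ₀) :
    √(2 - √2 * b₁) * √((4 - δ₀) / 5) ≤ max (√2 * |b₂|) √t := by
  set u := √(2 - √2 * b₁)
  set w := √((4 - δ₀) / 5)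
  have hs : √2 ^ 2 = 2 := sq_sqrt zero_le_two
  have hb₁ := abs_le.1 (abs_le_of_sq_le_sq (a := √2 * b₁) (by nlinarith) zero_le_two)
  have hu : u ^ 2 = 2 - √2 * b₁ := sq_sqrt (by linarith)
  have hw : 5 * w ^ 2 ≤ 4 - u ^ 2 := by
    rw [sq_sqrt', mul_max_of_nonneg _ _ (by norm_num : (0 : ℝ) ≤ 5)]
    exact max_le (by linarith) (by linarith)
  rcases le_or_gt (u * w) (√2 * |b₂|) with h | h
  · exact le_max_of_le_left h
  refine le_max_of_le_right (Real.le_sqrt_of_sq_le ?_)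
  have hb₂ : 2 * b₂ ^ 2 ≤ (u * w) ^ 2 := by
    rw [← sq_abs b₂, ← hs, ← mul_pow]
    exact pow_le_pow_left₀ (by positivity) h.le 2
  have hb₁' : 2 * b₁ ^ 2 = (2 - u ^ 2) ^ 2 := by rw [hu, sub_sub_cancel, mul_pow, hs]
  nlinarith [mul_nonneg (sq_nonneg u) (sub_nonneg.2 hw)]

lemma szarek_stability_bound (ht : b₁ ^ 2 + b₂ ^ 2 + 2 * t = 2) (ht₀ : 0 ≤ t)
    (hδ : 2 - √2 * b₁ ≤ δ₀) :
    1 / √2 + 1 / (2 * √2) * (√((4 - δ₀) / 5) - √δ₀) * √(2 - √2 * b₁) ≤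
      (b₁ + max |b₂| (√t / √2)) / 2 := by
  have hs : √2 ^ 2 = 2 := sq_sqrt zero_le_two
  have hs₀ : 0 < √2 := by positivity
  have hmax : max (√2 * |b₂|) √t = √2 * max |b₂| (√t / √2) := by
    rw [mul_max_of_nonneg _ _ hs₀.le, mul_div_cancel₀ _ hs₀.ne']
  have hkey := hmax ▸ sqrt_deficit_mul_le_max ht ht₀ hδ
  have hb₁ := abs_le.1 (abs_le_of_sq_le_sq (a := √2 * b₁) (by nlinarith) zero_le_two)
  have hu : √(2 - √2 * b₁) ^ 2 = 2 - √2 * b₁ := sq_sqrt (by linarith)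
  have huv : √(2 - √2 * b₁) ≤ √δ₀ := sqrt_le_sqrt hδ
  have hlhs : 1 / √2 + 1 / (2 * √2) * (√((4 - δ₀) / 5) - √δ₀) * √(2 - √2 * b₁) =
      (2 + (√((4 - δ₀) / 5) - √δ₀) * √(2 - √2 * b₁)) / (2 * √2) := by
    field_simp
  rw [hlhs, div_le_iff₀ (by positivity)]
  nlinarith [mul_le_mul_of_nonneg_left huv (sqrt_nonneg (2 - √2 * b₁))]

end TwoVariable

theorem stability_szarek_near_extremizer_general {Ω : Type*} [MeasurableSpace Ω] (μ : Measure Ω)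
    (n : ℕ) (δ₀ : ℝ) (c₀ : ℝ)
    (hc₀ : c₀ = (1 / (2 * Real.sqrt 2)) * (Real.sqrt ((4 - δ₀) / 5) - Real.sqrt δ₀))
    (a : Fin (n + 2) → ℝ) (ha : ∑ j, a j ^ 2 = 1)
    (hδ : 2 - Real.sqrt 2 * (a 0 + a 1) ≤ δ₀)
    (ε : Fin (n + 2) → Ω → ℝ)
    (hεindep : iIndepFun ε μ)
    (hεdist : ∀ j, Measure.map (ε j) μ =
      (2⁻¹ : ENNReal) • (Measure.dirac (1 : ℝ) + Measure.dirac (-1 : ℝ))) :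
    (∫ ω, |∑ j, a j * ε j ω| ∂μ) ≥
      1 / Real.sqrt 2 + c₀ * Real.sqrt (2 - Real.sqrt 2 * (a 0 + a 1)) := by
  set t := ∑ j, Fin.tail (Fin.tail a) j ^ 2
  have ht : (a 0 + a 1) ^ 2 + (a 0 - a 1) ^ 2 + 2 * t = 2 := by
    simp only [Fin.sum_univ_succ, Fin.succ_zero_eq_one] at ha
    simp only [t, Fin.tail_def]
    linarith
  have hexp : ∫ ω, |∑ j, a j * ε j ω| ∂μ =
      (∑ s, |BooleanCube.rademacherSum a s|) / 2 ^ (n + 2) :=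
    integral_comp_eq_cube_average (g := fun x => |∑ j, a j * x j|) hεindep hεdist (by fun_prop)
  rw [hexp, hc₀, ge_iff_le]
  calc _ ≤ (a 0 + a 1 + max |a 0 - a 1| (√t / √2)) / 2 :=
        szarek_stability_bound ht (by positivity) hδ
    _ ≤ (|a 0 + a 1| + max |a 0 - a 1| (√t / √2)) / 2 := by gcongr; exact le_abs_self _
    _ ≤ _ := BooleanCube.average_abs_rademacherSum_ge a

theorem stability_szarek_near_extremizer {Ω : Type*} [MeasurableSpace Ω] (μ : Measure Ω)
    [IsProbabilityMeasure μ] (n : ℕ) (δ₀ : ℝ) (hδ₀ : 0 < δ₀) (hδ₀' : δ₀ < 2 / 3)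
    (c₀ : ℝ) (hc₀ : c₀ = (1 / (2 * Real.sqrt 2)) * (Real.sqrt ((4 - δ₀) / 5) - Real.sqrt δ₀))
    (a : Fin (n + 2) → ℝ) (ha : ∑ j, a j ^ 2 = 1)
    (hmono : Antitone a) (hnonneg : ∀ j, 0 ≤ a j)
    (hδ : 2 - Real.sqrt 2 * (a 0 + a 1) ≤ δ₀)
    (ε : Fin (n + 2) → Ω → ℝ)
    (hεindep : iIndepFun ε μ)
    (hεdist : ∀ j, Measure.map (ε j) μ =
      (2⁻¹ : ENNReal) • (Measure.dirac (1 : ℝ) + Measure.dirac (-1 : ℝ))) :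
    (∫ ω, |∑ j, a j * ε j ω| ∂μ) ≥
      1 / Real.sqrt 2 + c₀ * Real.sqrt (2 - Real.sqrt 2 * (a 0 + a 1)) :=
  stability_szarek_near_extremizer_general μ n δ₀ c₀ hc₀ a ha hδ ε hεindep hεdist
end

section
/- Let F(s) = (2/√(πs))·Γ((s+1)/2)/Γ(s/2) for s > 0, which is increasing on (0,∞) with F(2) = 1/√2. Suppose a is a unit vector in ℝⁿ with a₁ ≥ ... ≥ a_n ≥ 0, aⱼ^(-2) ≥ l₀ for all j ≥ 2 for some l₀ > 2, and a₁ ≤ 1/√2. If Haagerup's bound E|∑ aⱼεⱼ| ≥ ∑ⱼ aⱼ²F(aⱼ^(-2)) holds, then E|∑ aⱼεⱼ| ≥ (F(2) + F(l₀))/2 = 1/√2 + (F(l₀) - F(2))/2. -/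
/-!
With `Q x = Γ(x + 1/2)² / (x Γ(x)²)` one has `F s ^ 2 = (2 / π) Q (s / 2)`. Log-convexity
of `Γ` squeezes `x / (x + 1/2) ≤ Q x ≤ 1`, so `Q → 1` at infinity, while `Q (x + 1) = Q x · r x`
with `r x = (x + 1/2)² / (x (x + 1))` decreasing. Hence for `x ≤ y` the ratio
`Q (x + N) / Q (y + N)` increases with `N` towards `1`, which gives `Q x ≤ Q y`. The bound on the
expectation is then a convex-combination estimate: the weight `a₀² ≤ 1/2` sits at `F 2`, the
rest at `F l₀ ≥ F 2`.
-/

open Real MeasureTheory ProbabilityTheory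
open Filter Topology Set

namespace Real

theorem Gamma_midpoint_sq_le {s t : ℝ} (hs : 0 < s) (ht : 0 < t) :
    Gamma ((s + t) / 2) ^ 2 ≤ Gamma s * Gamma t := by
  have h := Gamma_mul_add_mul_le_rpow_Gamma_mul_rpow_Gamma hs ht one_half_pos one_half_pos
    (add_halves 1)
  rw [← sqrt_eq_rpow, ← sqrt_eq_rpow, ← sqrt_mul (Gamma_pos_of_pos hs).le] at h
  calc Gamma ((s + t) / 2) ^ 2 = Gamma (1 / 2 * s + 1 / 2 * t) ^ 2 := by ring_nf
    _ ≤ √(Gamma s * Gamma t) ^ 2 := by gcongr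
    _ = Gamma s * Gamma t := sq_sqrt (mul_pos (Gamma_pos_of_pos hs) (Gamma_pos_of_pos ht)).le

end Real

noncomputable def gammaHalfRatioSq (x : ℝ) : ℝ := Gamma (x + 1 / 2) ^ 2 / (x * Gamma x ^ 2)

theorem gammaHalfRatioSq_le_one {x : ℝ} (hx : 0 < x) : gammaHalfRatioSq x ≤ 1 := by
  have h := Gamma_midpoint_sq_le hx (by linarith : 0 < x + 1)
  rw [Gamma_add_one hx.ne', show (x + (x + 1)) / 2 = x + 1 / 2 by ring] at h
  have := Gamma_pos_of_pos hx
  rw [gammaHalfRatioSq, div_le_one (by positivity)]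
  linarith

theorem div_add_half_le_gammaHalfRatioSq {x : ℝ} (hx : 0 < x) :
    x / (x + 1 / 2) ≤ gammaHalfRatioSq x := by
  have h := Gamma_midpoint_sq_le (by linarith : 0 < x + 1 / 2) (by linarith : 0 < x + 1 / 2 + 1)
  rw [Gamma_add_one (by linarith), show (x + 1 / 2 + (x + 1 / 2 + 1)) / 2 = x + 1 by ring,
    Gamma_add_one hx.ne'] at h
  have := Gamma_pos_of_pos hx
  rw [gammaHalfRatioSq, div_le_div_iff₀ (by linarith) (by positivity)]
  nlinarith

theorem gammaHalfRatioSq_pos {x : ℝ} (hx : 0 < x) : 0 < gammaHalfRatioSq x :=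
  (div_pos hx (by linarith)).trans_le (div_add_half_le_gammaHalfRatioSq hx)

theorem tendsto_div_add_half_atTop : Tendsto (fun x : ℝ => x / (x + 1 / 2)) atTop (𝓝 1) := by
  have h : Tendsto (fun x : ℝ => 1 - 1 / 2 * (x + 1 / 2)⁻¹) atTop (𝓝 (1 - 1 / 2 * 0)) :=
    tendsto_const_nhds.sub <| tendsto_const_nhds.mul <|
      tendsto_inv_atTop_zero.comp <| tendsto_atTop_add_const_right _ _ tendsto_id
  rw [mul_zero, sub_zero] at h
  refine h.congr' ?_
  filter_upwards [eventually_gt_atTop 0] with x hx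
  field_simp
  ring

theorem tendsto_gammaHalfRatioSq_atTop : Tendsto gammaHalfRatioSq atTop (𝓝 1) :=
  tendsto_of_tendsto_of_tendsto_of_le_of_le' tendsto_div_add_half_atTop tendsto_const_nhds
    ((eventually_gt_atTop 0).mono fun _ => div_add_half_le_gammaHalfRatioSq)
    ((eventually_gt_atTop 0).mono fun _ => gammaHalfRatioSq_le_one)

theorem gammaHalfRatioSq_add_one {x : ℝ} (hx : 0 < x) :
    gammaHalfRatioSq (x + 1) = gammaHalfRatioSq x * ((x + 1 / 2) ^ 2 / (x * (x + 1))) := by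
  have := Gamma_pos_of_pos hx
  rw [gammaHalfRatioSq, gammaHalfRatioSq, add_right_comm, Gamma_add_one (by linarith),
    Gamma_add_one hx.ne']
  field_simp

theorem antitoneOn_add_half_sq_div :
    AntitoneOn (fun t : ℝ => (t + 1 / 2) ^ 2 / (t * (t + 1))) (Ioi 0) := by
  intro x hx y hy hxy
  simp only [mem_Ioi] at hx hy
  rw [div_le_div_iff₀ (by positivity) (by positivity)]
  nlinarith [mul_le_mul hxy hxy hx.le hy.le]

theorem monotoneOn_gammaHalfRatioSq : MonotoneOn gammaHalfRatioSq (Ioi 0) := by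
  intro x hx y hy hxy
  simp only [mem_Ioi] at hx hy
  have key : ∀ N : ℕ, gammaHalfRatioSq x * gammaHalfRatioSq (y + N) ≤
      gammaHalfRatioSq y * gammaHalfRatioSq (x + N) := by
    intro N
    induction N with
    | zero => simp [mul_comm]
    | succ N ih =>
      push_cast
      rw [← add_assoc, ← add_assoc, gammaHalfRatioSq_add_one (by positivity),
        gammaHalfRatioSq_add_one (by positivity), ← mul_assoc, ← mul_assoc]
      have := gammaHalfRatioSq_pos hy
      have := gammaHalfRatioSq_pos (by positivity : 0 < x + N)
      gcongr ?_ * ?_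
      exact antitoneOn_add_half_sq_div (by simp; positivity) (by simp; positivity) (by linarith)
  have hlim (z : ℝ) : Tendsto (fun N : ℕ => gammaHalfRatioSq (z + N)) atTop (𝓝 1) :=
    tendsto_gammaHalfRatioSq_atTop.comp <|
      tendsto_atTop_add_const_left _ _ tendsto_natCast_atTop_atTop
  simpa using le_of_tendsto_of_tendsto' ((hlim y).const_mul _) ((hlim x).const_mul _) key

noncomputable def haagerupF (s : ℝ) : ℝ :=
  2 / √(π * s) * (Gamma ((s + 1) / 2) / Gamma (s / 2))

theorem haagerupF_eq_sqrt {s : ℝ} (hs : 0 < s) :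
    haagerupF s = √(2 / π * gammaHalfRatioSq (s / 2)) := by
  have := Gamma_pos_of_pos (half_pos hs)
  have := Gamma_pos_of_pos (by linarith : 0 < (s + 1) / 2)
  rw [eq_comm, sqrt_eq_iff_eq_sq (by have := gammaHalfRatioSq_pos (half_pos hs); positivity)
    (by unfold haagerupF; positivity), haagerupF, gammaHalfRatioSq, mul_pow, div_pow, div_pow,
    sq_sqrt (by positivity), show s / 2 + 1 / 2 = (s + 1) / 2 by ring]
  field_simp

theorem monotoneOn_haagerupF : MonotoneOn haagerupF (Ioi 0) := by
  intro s (hs : 0 < s) t (ht : 0 < t) hst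
  rw [haagerupF_eq_sqrt hs, haagerupF_eq_sqrt ht]
  gcongr
  exact monotoneOn_gammaHalfRatioSq (half_pos hs) (half_pos ht) (by linarith)

theorem haagerupF_two : haagerupF 2 = 1 / √2 := by
  rw [haagerupF, show ((2 : ℝ) + 1) / 2 = 1 / 2 + 1 by norm_num, div_self two_ne_zero,
    Gamma_add_one one_half_pos.ne', Gamma_one_half_eq, Gamma_one, mul_comm π, sqrt_mul zero_le_two]
  have := sqrt_pos.2 pi_pos
  field_simp

theorem mul_apply_le_mul_apply_inv {f : ℝ → ℝ} (hf : MonotoneOn f (Ioi 0)) {t w : ℝ}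
    (ht : 0 < t) (hw : 0 ≤ w) (hwt : w * t ≤ 1) : w * f t ≤ w * f w⁻¹ := by
  rcases hw.eq_or_lt with rfl | hw
  · simp
  have htw : t ≤ w⁻¹ := by simpa using (le_inv_mul_iff₀ hw (b := 1)).2 (by simpa using hwt)
  exact mul_le_mul_of_nonneg_left (hf ht (ht.trans_le htw) htw) hw.le

theorem le_sum_mul_apply_inv {f : ℝ → ℝ} (hf : MonotoneOn f (Ioi 0)) {u v : ℝ} (hu : 0 < u)
    (hv : 0 < v) {n : ℕ} (w : Fin (n + 1) → ℝ) (hw : ∀ j, 0 ≤ w j) (hsum : ∑ j, w j = 1)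
    (hw₀ : w 0 * u ≤ 1) (hwv : ∀ j ≠ 0, w j * v ≤ 1) :
    w 0 * f u + (1 - w 0) * f v ≤ ∑ j, w j * f (w j)⁻¹ := by
  rw [Fin.sum_univ_succ] at hsum ⊢
  rw [← eq_sub_iff_add_eq'] at hsum
  rw [← hsum, Finset.sum_mul]
  exact add_le_add (mul_apply_le_mul_apply_inv hf hu (hw 0) hw₀) <| Finset.sum_le_sum fun j _ =>
    mul_apply_le_mul_apply_inv hf hv (hw _) (hwv _ (Fin.succ_ne_zero j))

theorem haagerup_function_bound_general {Ω : Type*} [MeasurableSpace Ω] (μ : Measure Ω)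
    (n : ℕ)
    (F : ℝ → ℝ)
    (hF : F = fun s => 2 / Real.sqrt (Real.pi * s) * (Real.Gamma ((s + 1) / 2) / Real.Gamma (s / 2)))
    (a : Fin (n + 1) → ℝ) (ha : ∑ j, a j ^ 2 = 1)
    (hnonneg : ∀ j, 0 ≤ a j)
    (l₀ : ℝ) (hl₀ : 2 < l₀) (hsmall : ∀ j : Fin (n + 1), j ≠ 0 → l₀ ≤ ((a j) ^ 2)⁻¹)
    (ha₁ : a 0 ≤ 1 / Real.sqrt 2)
    (ε : Fin (n + 1) → Ω → ℝ) :
    MonotoneOn F (Set.Ioi 0) ∧ F 2 = 1 / Real.sqrt 2 ∧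
    ((∫ ω, |∑ j, a j * ε j ω| ∂μ) ≥ ∑ j, (a j) ^ 2 * F (((a j) ^ 2)⁻¹) →
      (∫ ω, |∑ j, a j * ε j ω| ∂μ) ≥ (F 2 + F l₀) / 2 ∧
        (F 2 + F l₀) / 2 = 1 / Real.sqrt 2 + (F l₀ - F 2) / 2) := by
  obtain rfl : F = haagerupF := hF
  refine ⟨monotoneOn_haagerupF, haagerupF_two, fun hE => ⟨?_, by rw [haagerupF_two]; ring⟩⟩
  have hl₀_pos : 0 < l₀ := by linarith
  have ha₀ : a 0 ^ 2 * 2 ≤ 1 := by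
    have := pow_le_pow_left₀ (hnonneg 0) ha₁ 2
    rw [div_pow, sq_sqrt zero_le_two] at this
    linarith
  have hsmall' (j : Fin (n + 1)) (hj : j ≠ 0) : a j ^ 2 * l₀ ≤ 1 :=
    (mul_le_mul_of_nonneg_left (hsmall j hj) (sq_nonneg _)).trans mul_inv_le_one
  have hsum := le_sum_mul_apply_inv monotoneOn_haagerupF two_pos hl₀_pos (fun j => a j ^ 2)
    (fun j => sq_nonneg _) ha ha₀ hsmall'
  have hF2l₀ : haagerupF 2 ≤ haagerupF l₀ :=
    monotoneOn_haagerupF (mem_Ioi.2 two_pos) hl₀_pos hl₀.le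
  have hmix : 0 ≤ (1 - 2 * a 0 ^ 2) * (haagerupF l₀ - haagerupF 2) :=
    mul_nonneg (by linarith) (sub_nonneg.2 hF2l₀)
  linarith

theorem haagerup_function_bound {Ω : Type*} [MeasurableSpace Ω] (μ : Measure Ω)
    [IsProbabilityMeasure μ] (n : ℕ)
    (F : ℝ → ℝ)
    (hF : F = fun s => 2 / Real.sqrt (Real.pi * s) * (Real.Gamma ((s + 1) / 2) / Real.Gamma (s / 2)))
    (a : Fin (n + 1) → ℝ) (ha : ∑ j, a j ^ 2 = 1)
    (hmono : Antitone a) (hnonneg : ∀ j, 0 ≤ a j)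
    (l₀ : ℝ) (hl₀ : 2 < l₀) (hsmall : ∀ j : Fin (n + 1), j ≠ 0 → l₀ ≤ ((a j) ^ 2)⁻¹)
    (ha₁ : a 0 ≤ 1 / Real.sqrt 2)
    (ε : Fin (n + 1) → Ω → ℝ)
    (hεindep : iIndepFun ε μ)
    (hεdist : ∀ j, Measure.map (ε j) μ =
      (2⁻¹ : ENNReal) • (Measure.dirac (1 : ℝ) + Measure.dirac (-1 : ℝ))) :
    MonotoneOn F (Set.Ioi 0) ∧ F 2 = 1 / Real.sqrt 2 ∧
    ((∫ ω, |∑ j, a j * ε j ω| ∂μ) ≥ ∑ j, (a j) ^ 2 * F (((a j) ^ 2)⁻¹) →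
      (∫ ω, |∑ j, a j * ε j ω| ∂μ) ≥ (F 2 + F l₀) / 2 ∧
        (F 2 + F l₀) / 2 = 1 / Real.sqrt 2 + (F l₀ - F 2) / 2) :=
  haagerup_function_bound_general μ n F hF a ha hnonneg l₀ hl₀ hsmall ha₁ ε
end

section
/- Let a be a unit vector in ℝⁿ with a₁ ≥ a₂ ≥ ... ≥ a_n ≥ 0, a₁ ≥ 1/√2, a₁² + a₂² ≥ 1/2 and a₁ ≤ 1/√2 + γ₀ with γ₀ ≤ 1 - 1/√2. Define b = (1/√2, √(a₁²+a₂²-1/2), a₃, ..., a_n). Then b is a unit vector, √(a₁²+a₂²-1/2) - a₂ ≤ √(a₁² - 1/2) < √(2γ₀), and |a - b|² < γ₀² + 2γ₀. -/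
open Real

set_option maxHeartbeats 1000000

theorem replacement_vector_estimates (n : ℕ) (γ₀ : ℝ) (hγ₀ : 0 < γ₀)
    (hγ₀' : γ₀ ≤ 1 - 1 / Real.sqrt 2)
    (a : Fin (n + 2) → ℝ) (ha : ∑ i, a i ^ 2 = 1)
    (hmono : Antitone a) (hnonneg : ∀ i, 0 ≤ a i)
    (h₁ : 1 / Real.sqrt 2 ≤ a 0) (h₁' : a 0 ≤ 1 / Real.sqrt 2 + γ₀)
    (h₁₂ : 1 / 2 ≤ a 0 ^ 2 + a 1 ^ 2)
    (b : Fin (n + 2) → ℝ)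
    (hb : b = fun i => if i = 0 then 1 / Real.sqrt 2
      else if i = 1 then Real.sqrt (a 0 ^ 2 + a 1 ^ 2 - 1 / 2) else a i) :
    (∑ i, b i ^ 2 = 1) ∧
    Real.sqrt (a 0 ^ 2 + a 1 ^ 2 - 1 / 2) - a 1 ≤ Real.sqrt (a 0 ^ 2 - 1 / 2) ∧
    Real.sqrt (a 0 ^ 2 - 1 / 2) < Real.sqrt (2 * γ₀) ∧
    ∑ i, (a i - b i) ^ 2 < γ₀ ^ 2 + 2 * γ₀ := by
  have hr2 : (Real.sqrt 2) ^ 2 = 2 := Real.sq_sqrt (by norm_num)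
  have hrpos : (0:ℝ) < Real.sqrt 2 := Real.sqrt_pos.mpr (by norm_num)
  have hrlt2 : Real.sqrt 2 < 2 := by nlinarith
  have hsq2 : (1 / Real.sqrt 2) ^ 2 = 1 / 2 := by
    rw [div_pow, one_pow, hr2]
  have hb0 : b 0 = 1 / Real.sqrt 2 := by simp [hb]
  have hb1 : b 1 = Real.sqrt (a 0 ^ 2 + a 1 ^ 2 - 1 / 2) := by
    rw [hb]; norm_num
  have hbi : ∀ i : Fin n, b i.succ.succ = a i.succ.succ := by
    intro i
    rw [hb]
    simp [Fin.succ_ne_zero, Fin.succ_succ_ne_one]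
  have hs0 : (0:ℝ) ≤ a 0 ^ 2 + a 1 ^ 2 - 1 / 2 := by linarith
  have ht0 : (0:ℝ) ≤ a 0 ^ 2 - 1 / 2 := by
    have := pow_le_pow_left₀ (le_of_lt (by positivity : (0:ℝ) < 1 / Real.sqrt 2)) h₁ 2
    rw [hsq2] at this; linarith
  have hsqs : Real.sqrt (a 0 ^ 2 + a 1 ^ 2 - 1 / 2) ^ 2 = a 0 ^ 2 + a 1 ^ 2 - 1 / 2 :=
    Real.sq_sqrt hs0
  have hsqt : Real.sqrt (a 0 ^ 2 - 1 / 2) ^ 2 = a 0 ^ 2 - 1 / 2 := Real.sq_sqrt ht0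
  have ha1 : 0 ≤ a 1 := hnonneg 1
  have hsqtnn : 0 ≤ Real.sqrt (a 0 ^ 2 - 1 / 2) := Real.sqrt_nonneg _
  -- part 2
  have part2 : Real.sqrt (a 0 ^ 2 + a 1 ^ 2 - 1 / 2) - a 1 ≤ Real.sqrt (a 0 ^ 2 - 1 / 2) := by
    have hle : a 0 ^ 2 + a 1 ^ 2 - 1 / 2 ≤ (a 1 + Real.sqrt (a 0 ^ 2 - 1 / 2)) ^ 2 := by
      nlinarith
    have := Real.sqrt_le_sqrt hle
    rwa [Real.sqrt_sq (by positivity), ← sub_le_iff_le_add'] at this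
  -- part 3: a0^2 - 1/2 < 2γ₀
  have hkey : a 0 ^ 2 - 1 / 2 < 2 * γ₀ := by
    have h1r : 1 / Real.sqrt 2 = Real.sqrt 2 / 2 := by
      rw [div_eq_div_iff hrpos.ne' two_ne_zero]; nlinarith
    rw [h1r] at h₁' hγ₀'
    nlinarith
  have part3 : Real.sqrt (a 0 ^ 2 - 1 / 2) < Real.sqrt (2 * γ₀) :=
    Real.sqrt_lt_sqrt ht0 hkey
  -- √s ≥ a1
  have hsge : a 1 ≤ Real.sqrt (a 0 ^ 2 + a 1 ^ 2 - 1 / 2) := by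
    rw [show a 0 ^ 2 + a 1 ^ 2 - 1 / 2 = a 1 ^ 2 + (a 0 ^ 2 - 1 / 2) by ring]
    calc a 1 = Real.sqrt (a 1 ^ 2) := (Real.sqrt_sq ha1).symm
      _ ≤ _ := Real.sqrt_le_sqrt (by linarith)
  refine ⟨?_, part2, part3, ?_⟩
  · rw [Fin.sum_univ_succ, Fin.sum_univ_succ]
    rw [Fin.sum_univ_succ, Fin.sum_univ_succ] at ha
    simp only [Fin.succ_zero_eq_one] at ha ⊢
    simp only [hb0, hb1, hbi, hsq2, hsqs]
    linarith
  · rw [Fin.sum_univ_succ, Fin.sum_univ_succ]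
    have htail : ∑ i : Fin n, (a i.succ.succ - b i.succ.succ) ^ 2 = 0 := by
      apply Finset.sum_eq_zero
      intro i _
      rw [hbi]; ring
    rw [htail]
    simp only [Fin.succ_zero_eq_one, hb0, hb1]
    have e1 : (a 0 - 1 / Real.sqrt 2) ^ 2 ≤ γ₀ ^ 2 :=
      pow_le_pow_left₀ (by linarith) (by linarith) 2
    have e2 : (a 1 - Real.sqrt (a 0 ^ 2 + a 1 ^ 2 - 1 / 2)) ^ 2 < 2 * γ₀ := by
      have h0 : 0 ≤ Real.sqrt (a 0 ^ 2 + a 1 ^ 2 - 1 / 2) - a 1 := by linarith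
      have hsq := pow_le_pow_left₀ h0 part2 2
      calc (a 1 - Real.sqrt (a 0 ^ 2 + a 1 ^ 2 - 1 / 2)) ^ 2
          = (Real.sqrt (a 0 ^ 2 + a 1 ^ 2 - 1 / 2) - a 1) ^ 2 := by ring
        _ ≤ Real.sqrt (a 0 ^ 2 - 1 / 2) ^ 2 := hsq
        _ = a 0 ^ 2 - 1 / 2 := hsqt
        _ < 2 * γ₀ := hkey
    linarith
end
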